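/- arXiv:1604.00514 — 6 statements merged into one kernel-verified Lean document; each statement's English description precedes it below -/
import Mathlib

section
/- Let I' be a nontrivial closed subinterval of I = [0,1], let Q be a compact Hausdorff topological space, and let n ≥ 1 be an integer. Given a continuous map f : Q × I → ℂⁿ such that for every q ∈ Q the path f(q,·) is full on I' (i.e. the ℂ-linear span of f(q, I') equals ℂⁿ), there exist an integer N ≥ n and continuous functions g₁, …, g_N : I → ℂ, each vanishing identically on I \ I', such that, setting h(ζ,s) := ∏_{i=1}^N (1 + ζᵢ gᵢ(s)) for ζ = (ζ₁,…,ζ_N) ∈ ℂᴺ and s ∈ I, the derivative at ζ = 0 of the map ℂᴺ ∋ ζ ↦ ∫₀¹ h(ζ,s) f(q,s) ds ∈ ℂⁿ is a surjective ℂ-linear map ℂᴺ → ℂⁿ for every q ∈ Q. -/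
/-!
Fix `q₀`. If the periods `∫ G • f(q₀,·)` of continuous `G` vanishing off `(a,b)` missed a
hyperplane `ker φ`, testing against `G = bump · conj (φ ∘ f(q₀,·))` would force `φ ∘ f(q₀,·) = 0`
on `[a,b]`, contradicting fullness; so some `G_{q₀,1}, …, G_{q₀,n}` have periods forming a basis.
The periods depend continuously on `q`, hence remain a basis near `q₀`, and compactness of `Q`
leaves finitely many such families. Finally `∏ (1 + ζᵢ gᵢ) = 1 + ∑ ζᵢ gᵢ + O(‖ζ‖²)`, so the
derivative at `0` maps the `i`-th unit vector to `∫ gᵢ • f(q,·)`, and it is onto for every `q`.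
-/

open MeasureTheory Set Topology Submodule ComplexConjugate

noncomputable def bumpIoo (a b s : ℝ) : ℝ := max 0 ((s - a) * (b - s))

@[fun_prop]
lemma continuous_bumpIoo (a b : ℝ) : Continuous (bumpIoo a b) := by
  unfold bumpIoo
  fun_prop

lemma bumpIoo_nonneg (a b s : ℝ) : 0 ≤ bumpIoo a b s := le_max_left _ _

lemma bumpIoo_pos {a b s : ℝ} (hs : s ∈ Ioo a b) : 0 < bumpIoo a b s :=
  lt_max_of_lt_right (mul_pos (sub_pos.2 hs.1) (sub_pos.2 hs.2))

lemma bumpIoo_eq_zero {a b s : ℝ} (hab : a ≤ b) (hs : s ∉ Ioo a b) : bumpIoo a b s = 0 := by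
  refine max_eq_left ?_
  rcases le_or_gt s a with hsa | has
  · exact mul_nonpos_of_nonpos_of_nonneg (by linarith) (by linarith)
  · have hbs : b ≤ s := not_lt.1 fun h => hs ⟨has, h⟩
    exact mul_nonpos_of_nonneg_of_nonpos (by linarith) (by linarith)

theorem intervalIntegral.continuous_parametric_intervalIntegral_of_continuousOn
    {X E : Type*} [TopologicalSpace X] [NormedAddCommGroup E] [NormedSpace ℝ E]
    {f : X → ℝ → E} {a b : ℝ} (hab : a ≤ b)
    (hf : ContinuousOn (Function.uncurry f) (univ ×ˢ Icc a b)) :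
    Continuous fun x => ∫ t in a..b, f x t := by
  have hext : Continuous (Function.uncurry fun x t => f x (projIcc a b hab t)) :=
    hf.comp_continuous (f := fun p : X × ℝ => (p.1, (projIcc a b hab p.2 : ℝ)))
      (by fun_prop) fun p => ⟨mem_univ _, (projIcc a b hab p.2).2⟩
  refine (continuous_parametric_intervalIntegral_of_continuous' (μ := volume) hext a b).congr
    fun x => intervalIntegral.integral_congr fun t ht => ?_
  rw [uIcc_of_le hab] at ht
  simp [projIcc_of_mem hab ht]

section ProdOneAdd

variable {ι E : Type*} [Fintype ι] [NormedAddCommGroup E] [NormedSpace ℂ E]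
  {g : ι → ℝ → ℂ} {F : ℝ → E} {a b : ℝ}

lemma integral_prod_one_add_smul (hg : ∀ i, ContinuousOn (g i) (uIcc a b))
    (hF : ContinuousOn F (uIcc a b)) (ζ : ι → ℂ) :
    ∫ s in a..b, (∏ i, (1 + ζ i * g i s)) • F s =
      ∑ T ∈ Finset.univ.powerset, (∏ i ∈ T, ζ i) • ∫ s in a..b, (∏ i ∈ T, g i s) • F s := by
  simp_rw [Finset.prod_one_add, Finset.prod_mul_distrib, Finset.sum_smul, mul_smul]
  have hint (T : Finset ι) :
      IntervalIntegrable (fun s => (∏ i ∈ T, ζ i) • (∏ i ∈ T, g i s) • F s) volume a b :=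
    (((continuousOn_finsetProd _ fun i _ => hg i).smul hF).const_smul _).intervalIntegrable
  rw [intervalIntegral.integral_finsetSum fun T _ => hint T]
  simp_rw [intervalIntegral.integral_smul]

lemma differentiable_integral_prod_one_add_smul (hg : ∀ i, ContinuousOn (g i) (uIcc a b))
    (hF : ContinuousOn F (uIcc a b)) :
    Differentiable ℂ fun ζ : ι → ℂ => ∫ s in a..b, (∏ i, (1 + ζ i * g i s)) • F s := by
  simp_rw [integral_prod_one_add_smul hg hF]
  fun_prop

lemma fderiv_integral_prod_one_add_smul_single [DecidableEq ι]
    (hg : ∀ i, ContinuousOn (g i) (uIcc a b)) (hF : ContinuousOn F (uIcc a b)) (i : ι) :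
    fderiv ℂ (fun ζ : ι → ℂ => ∫ s in a..b, (∏ i, (1 + ζ i * g i s)) • F s) 0 (Pi.single i 1) =
      ∫ s in a..b, g i s • F s := by
  set Φ := fun ζ : ι → ℂ => ∫ s in a..b, (∏ i, (1 + ζ i * g i s)) • F s
  have hline (t : ℂ) :
      Φ (t • Pi.single i 1) = (∫ s in a..b, F s) + t • ∫ s in a..b, g i s • F s := by
    have hprod (s : ℝ) : ∏ j, (1 + (t • Pi.single i 1 : ι → ℂ) j * g j s) = 1 + t * g i s := by
      rw [Finset.prod_eq_single i (fun j _ hj => by simp [hj]) (by simp)]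
      simp
    have hgF : IntervalIntegrable (fun s => t • g i s • F s) volume a b :=
      (((hg i).smul hF).const_smul t).intervalIntegrable
    simp only [Φ, hprod, add_smul, one_smul, mul_smul]
    rw [intervalIntegral.integral_add hF.intervalIntegrable hgF,
      intervalIntegral.integral_smul]
  have hchain :
      HasDerivAt (fun t : ℂ => Φ (t • Pi.single i 1)) (fderiv ℂ Φ 0 (Pi.single i 1)) 0 := by
    have hsmul := (hasDerivAt_id' (0 : ℂ)).smul_const (Pi.single i (1 : ℂ) : ι → ℂ)
    rw [one_smul] at hsmul
    exact (differentiable_integral_prod_one_add_smul hg hF 0).hasFDerivAt.comp_hasDerivAt_of_eq 0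
      hsmul (zero_smul _ _).symm
  have hline_deriv :
      HasDerivAt (fun t : ℂ => Φ (t • Pi.single i 1)) (∫ s in a..b, g i s • F s) 0 := by
    simp_rw [hline]
    simpa using ((hasDerivAt_id (0 : ℂ)).smul_const (∫ s in a..b, g i s • F s)).const_add
      (∫ s in a..b, F s)
  exact hchain.unique hline_deriv

lemma surjective_fderiv_integral_prod_one_add_smul
    (hg : ∀ i, ContinuousOn (g i) (uIcc a b)) (hF : ContinuousOn F (uIcc a b))
    (hspan : span ℂ (range fun i => ∫ s in a..b, g i s • F s) = ⊤) :
    Function.Surjective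
      (fderiv ℂ (fun ζ : ι → ℂ => ∫ s in a..b, (∏ i, (1 + ζ i * g i s)) • F s) 0) := by
  classical
  rw [← ContinuousLinearMap.coe_coe, ← LinearMap.range_eq_top, eq_top_iff, ← hspan, span_le]
  rintro _ ⟨i, rfl⟩
  exact ⟨Pi.single i 1, fderiv_integral_prod_one_add_smul_single hg hF i⟩

end ProdOneAdd

theorem eqOn_zero_of_forall_integral_bumpIoo_mul_eq_zero {a b c d : ℝ} (hca : c ≤ a) (hab : a < b)
    (hbd : b ≤ d) {w : ℝ → ℂ} (hw : ContinuousOn w (Icc c d))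
    (h : ∀ u : C(ℝ, ℂ), ∫ s in c..d, bumpIoo a b s * u s * w s = 0) : EqOn w 0 (Icc a b) := by
  have hcd : c ≤ d := by linarith
  -- testing against `u = conj w` turns the hypothesis into `∫ bumpIoo a b * ‖w‖² = 0`
  let u : C(ℝ, ℂ) := ⟨fun s => conj (w (projIcc c d hcd s)),
    Complex.continuous_conj.comp (hw.comp_continuous (by fun_prop) fun s => (projIcc c d hcd s).2)⟩
  let r : ℝ → ℝ := fun s => bumpIoo a b s * Complex.normSq (w s)
  have hr : ContinuousOn r (Icc c d) :=
    (continuous_bumpIoo a b).continuousOn.mul (Complex.continuous_normSq.comp_continuousOn hw)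
  have hr_int : ∫ s in c..d, r s = 0 := by
    have hu := h u
    rw [intervalIntegral.integral_congr (g := fun s => (r s : ℂ)) fun s hs => by
      rw [uIcc_of_le hcd] at hs
      simp [u, r, projIcc_of_mem hcd hs, mul_assoc, Complex.normSq_eq_conj_mul_self]] at hu
    exact_mod_cast intervalIntegral.integral_ofReal.symm.trans hu
  have hIoo : EqOn w 0 (Ioo a b) := by
    intro s hs
    by_contra hne
    have hpos := intervalIntegral.integral_pos (by linarith) hr
      (fun x _ => mul_nonneg (bumpIoo_nonneg a b x) (Complex.normSq_nonneg _))
      ⟨s, ⟨by linarith [hs.1], by linarith [hs.2]⟩,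
        mul_pos (bumpIoo_pos hs) (Complex.normSq_pos.2 hne)⟩
    linarith
  exact hIoo.of_subset_closure (hw.mono (Icc_subset_Icc hca hbd)) continuousOn_const
    Ioo_subset_Icc_self (closure_Ioo hab.ne).ge

theorem exists_continuous_integral_smul_eq {E : Type*} [NormedAddCommGroup E] [NormedSpace ℂ E]
    [FiniteDimensional ℂ E] {a b c d : ℝ} (hca : c ≤ a) (hab : a < b) (hbd : b ≤ d) {F : ℝ → E}
    (hF : ContinuousOn F (Icc c d)) (hspan : span ℂ (F '' Icc a b) = ⊤) (x : E) :
    ∃ G : ℝ → ℂ, Continuous G ∧ (∀ s ∉ Ioo a b, G s = 0) ∧ ∫ s in c..d, G s • F s = x := by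
  have hcd : c ≤ d := by linarith
  have hint (u : C(ℝ, ℂ)) :
      IntervalIntegrable (fun s => (bumpIoo a b s * u s) • F s) volume c d := by
    refine ContinuousOn.intervalIntegrable ?_
    rw [uIcc_of_le hcd]
    exact (((Complex.continuous_ofReal.comp (continuous_bumpIoo a b)).mul
      u.continuous).continuousOn).smul hF
  let Ψ : C(ℝ, ℂ) →ₗ[ℂ] E :=
    { toFun u := ∫ s in c..d, (bumpIoo a b s * u s) • F s
      map_add' u v := by
        simp only [ContinuousMap.add_apply, mul_add, add_smul]
        exact intervalIntegral.integral_add (hint u) (hint v)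
      map_smul' z u := by
        simp only [ContinuousMap.smul_apply, smul_eq_mul, mul_left_comm _ z, mul_smul,
          RingHom.id_apply]
        exact intervalIntegral.integral_smul _ _ }
  suffices hΨ : LinearMap.range Ψ = ⊤ by
    obtain ⟨u, hu⟩ := LinearMap.range_eq_top.1 hΨ x
    refine ⟨fun s => bumpIoo a b s * u s, by fun_prop, fun s hs => ?_, hu⟩
    simp [bumpIoo_eq_zero hab.le hs]
  by_contra hne
  obtain ⟨φ, hφ, hΨφ⟩ := (LinearMap.range Ψ).exists_le_ker_of_lt_top (lt_top_iff_ne_top.2 hne)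
  have hφF : EqOn (φ ∘ F) 0 (Icc a b) := by
    refine eqOn_zero_of_forall_integral_bumpIoo_mul_eq_zero hca hab hbd
      (φ.continuous_of_finiteDimensional.comp_continuousOn hF) fun u => ?_
    have := FiniteDimensional.complete ℂ E
    rw [← hΨφ (LinearMap.mem_range_self Ψ u)]
    change _ = LinearMap.toContinuousLinearMap φ (∫ s in c..d, (bumpIoo a b s * u s) • F s)
    rw [← ContinuousLinearMap.intervalIntegral_comp_comm _ (hint u)]
    simp [mul_assoc]
  refine hφ (LinearMap.ker_eq_top.1 (top_le_iff.1 ?_))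
  rw [← hspan, span_le]
  rintro _ ⟨s, hs, rfl⟩
  exact hφF hs

theorem exists_finset_forall_span_range_eq_top {Q 𝕜 E ι : Type*} [TopologicalSpace Q]
    [CompactSpace Q]
    [NontriviallyNormedField 𝕜] [CompleteSpace 𝕜] [NormedAddCommGroup E] [NormedSpace 𝕜 E]
    [FiniteDimensional 𝕜 E] [Fintype ι] (e : Module.Basis ι 𝕜 E) (v : Q → Q → ι → E)
    (hv : ∀ q₀ i, Continuous fun q => v q₀ q i) (hve : ∀ q₀, v q₀ q₀ = e) :
    ∃ t : Finset Q, ∀ q, ∃ q₀ ∈ t, span 𝕜 (range (v q₀ q)) = ⊤ := by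
  obtain ⟨t, ht⟩ :=
      CompactSpace.elim_nhds_subcover (fun q₀ => {q | LinearIndependent 𝕜 (v q₀ q)}) fun q₀ => by
      have hli : ∀ᶠ f in 𝓝 (v q₀ q₀), LinearIndependent 𝕜 f :=
        hve q₀ ▸ e.linearIndependent.eventually
      exact (continuous_pi (hv q₀)).continuousAt.eventually hli
  refine ⟨t, fun q => ?_⟩
  obtain ⟨q₀, hq₀, hq⟩ : ∃ q₀ ∈ t, LinearIndependent 𝕜 (v q₀ q) := by
    simpa using ht.ge (mem_univ q)
  exact ⟨q₀, hq₀, hq.span_eq_top_of_card_eq_finrank' (Module.finrank_eq_card_basis e).symm⟩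

theorem stmt_0_general
    (a b : ℝ) (ha : 0 ≤ a) (hab : a < b) (hb : b ≤ 1)
    (Q : Type) [TopologicalSpace Q] [CompactSpace Q]
    (n : ℕ)
    (f : Q → ℝ → EuclideanSpace ℂ (Fin n))
    (hf : ContinuousOn (fun p : Q × ℝ => f p.1 p.2) (univ ×ˢ Icc (0:ℝ) 1))
    (hfull : ∀ q : Q, Submodule.span ℂ (f q '' Icc a b) = ⊤) :
    ∃ N : ℕ, n ≤ N ∧ ∃ g : Fin N → ℝ → ℂ,
      (∀ i, ContinuousOn (g i) (Icc (0:ℝ) 1)) ∧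
      (∀ i, ∀ s ∈ Icc (0:ℝ) 1 \ Icc a b, g i s = 0) ∧
      (∀ q : Q, ∃ D : (Fin N → ℂ) →L[ℂ] EuclideanSpace ℂ (Fin n),
        HasFDerivAt
          (fun ζ : Fin N → ℂ =>
            ∫ s in (0:ℝ)..1, (∏ i, (1 + ζ i * g i s)) • f q s) D 0 ∧
        Function.Surjective D) := by
  have hI : uIcc (0:ℝ) 1 = Icc 0 1 := uIcc_of_le zero_le_one
  have hfq (q : Q) : ContinuousOn (f q) (Icc 0 1) :=
    hf.comp (Continuous.prodMk_right q).continuousOn fun s hs => ⟨mem_univ q, hs⟩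
  let e := (EuclideanSpace.basisFun (Fin n) ℂ).toBasis
  choose G hG hG_supp hG_int using fun (q₀ : Q) (j : Fin n) =>
    exists_continuous_integral_smul_eq ha hab hb (hfq q₀) (hfull q₀) (e j)
  obtain ⟨t, ht⟩ := exists_finset_forall_span_range_eq_top e
    (fun q₀ q j => ∫ s in (0:ℝ)..1, G q₀ j s • f q s)
    (fun q₀ j => intervalIntegral.continuous_parametric_intervalIntegral_of_continuousOn
      zero_le_one (((hG q₀ j).comp continuous_snd).continuousOn.smul hf))
    fun q₀ => funext (hG_int q₀)
  -- the `n` zero functions in front only serve to make `N ≥ n` when `Q` is empty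
  let g₀ : Fin n ⊕ (t × Fin n) → ℝ → ℂ := Sum.elim 0 fun p => G p.1 p.2
  have hg₀ : ∀ k, Continuous (g₀ k) ∧ ∀ s ∉ Ioo a b, g₀ k s = 0 := by
    simp only [Sum.forall]
    exact ⟨fun _ => ⟨continuous_const, fun _ _ => rfl⟩, fun p => ⟨hG _ _, hG_supp _ _⟩⟩
  let σ := Fintype.equivFin (Fin n ⊕ (t × Fin n))
  have hg (i : Fin _) : ContinuousOn (g₀ (σ.symm i)) (uIcc 0 1) := (hg₀ _).1.continuousOn
  refine ⟨_, by simp, fun i => g₀ (σ.symm i), fun i => (hg₀ _).1.continuousOn,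
    fun i s hs => (hg₀ _).2 s fun h => hs.2 (Ioo_subset_Icc_self h), fun q => ?_⟩
  refine ⟨_, (differentiable_integral_prod_one_add_smul hg (hI ▸ hfq q) 0).hasFDerivAt,
    surjective_fderiv_integral_prod_one_add_smul hg (hI ▸ hfq q) ?_⟩
  obtain ⟨q₀, hq₀, hspan⟩ := ht q
  rw [eq_top_iff, ← hspan]
  refine span_mono ?_
  rintro _ ⟨j, rfl⟩
  exact ⟨σ (.inr (⟨q₀, hq₀⟩, j)), by simp [g₀]⟩

/-- Lemma 2.2 of the paper: period dominating multipliers on an interval.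
`I' = [a,b]` is a nontrivial closed subinterval of `I = [0,1]`, `Q` is a compact Hausdorff
space, and `f : Q × I → ℂⁿ` is continuous with `f(q,·)` full on `I'` for every `q`. Then
there are `N ≥ n` continuous functions `g₁,…,g_N : I → ℂ` supported on `I'` such that the
derivative at `ζ = 0` of `ζ ↦ ∫₀¹ (∏ᵢ (1 + ζᵢ gᵢ(s))) f(q,s) ds` is surjective for all `q`. -/
theorem stmt_0
    (a b : ℝ) (ha : 0 ≤ a) (hab : a < b) (hb : b ≤ 1)
    (Q : Type) [TopologicalSpace Q] [CompactSpace Q] [T2Space Q]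
    (n : ℕ) (hn : 1 ≤ n)
    (f : Q → ℝ → EuclideanSpace ℂ (Fin n))
    (hf : ContinuousOn (fun p : Q × ℝ => f p.1 p.2) (univ ×ˢ Icc (0:ℝ) 1))
    (hfull : ∀ q : Q, Submodule.span ℂ (f q '' Icc a b) = ⊤) :
    ∃ N : ℕ, n ≤ N ∧ ∃ g : Fin N → ℝ → ℂ,
      (∀ i, ContinuousOn (g i) (Icc (0:ℝ) 1)) ∧
      (∀ i, ∀ s ∈ Icc (0:ℝ) 1 \ Icc a b, g i s = 0) ∧
      (∀ q : Q, ∃ D : (Fin N → ℂ) →L[ℂ] EuclideanSpace ℂ (Fin n),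
        HasFDerivAt
          (fun ζ : Fin N → ℂ =>
            ∫ s in (0:ℝ)..1, (∏ i, (1 + ζ i * g i s)) • f q s) D 0 ∧
        Function.Surjective D) :=
  stmt_0_general a b ha hab hb Q n f hf hfull
end

section
/- Let I' be a nontrivial closed subinterval of I = [0,1], let Q be a compact Hausdorff topological space, and let n ≥ 1 be an integer. If f : Q × I → ℂⁿ is continuous and for every q ∈ Q the ℂ-linear span of f(q, I') equals ℂⁿ, then there exist an integer N ≥ n and points s₁ < s₂ < ⋯ < s_N lying in the interior of I' such that the ℂ-linear span of {f(q,s₁), …, f(q,s_N)} equals ℂⁿ for every q ∈ Q. -/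
/-!
Spanning by finitely many vectors is an open condition, and by continuity the values of
`f(q, ·)` on the open interval `(a, b)` already span. So each `q` has a finite set of times in
`(a, b)` that spans for all `q'` in a neighbourhood of `q`; compactness of `Q` gives a finite
union of such sets that works for every `q`, and adding `n` further points makes it large enough.
-/

open Set Submodule Topology

theorem exists_finite_subset_span_image_eq_top {K V X : Type*} [DivisionRing K] [AddCommGroup V]
    [Module K V] [FiniteDimensional K V] {f : X → V} {s : Set X} (hs : span K (f '' s) = ⊤) :
    ∃ t ⊆ s, t.Finite ∧ span K (f '' t) = ⊤ := by
  refine (exists_subset_image_finite_and (p := fun u => span K u = ⊤)).1 ?_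
  obtain ⟨t, hts, -, hspan, -⟩ := exists_finset_span_eq_linearIndepOn K (f '' s)
  exact ⟨t, hts, t.finite_toSet, hspan.trans hs⟩

section FiniteDimensional

variable {𝕜 E : Type*} [NontriviallyNormedField 𝕜] [CompleteSpace 𝕜]
  [NormedAddCommGroup E] [NormedSpace 𝕜 E] [FiniteDimensional 𝕜 E]

/-- A spanning family contains a basis; linear independence of that subfamily persists
under small perturbations, and a subfamily of `finrank 𝕜 E` independent vectors spans. -/
theorem isOpen_setOf_span_range_eq_top {ι : Type*} [Finite ι] :
    IsOpen {v : ι → E | span 𝕜 (range v) = ⊤} := by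
  refine isOpen_iff_mem_nhds.2 fun v (hv : span 𝕜 (range v) = ⊤) => ?_
  obtain ⟨u, hu, -, hind⟩ := exists_fun_fin_finrank_span_eq 𝕜 (range v)
  choose j hj using hu
  have hcard : Fintype.card (Fin (Module.finrank 𝕜 (span 𝕜 (range v)))) = Module.finrank 𝕜 E := by
    rw [Fintype.card_fin, hv, finrank_top]
  have hcomp : Continuous fun w : ι → E => w ∘ j := by fun_prop
  have hindep : ∀ᶠ w in 𝓝 v, LinearIndependent 𝕜 (w ∘ j) := by
    have hvj : v ∘ j = u := funext hj
    exact hcomp.continuousAt.eventually (hvj ▸ hind.eventually)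
  filter_upwards [hindep] with w hw
  exact eq_top_mono (span_mono (range_comp_subset_range j w))
    (hw.span_eq_top_of_card_eq_finrank' hcard)

theorem isOpen_setOf_span_image_eq_top {Q X : Type*} [TopologicalSpace Q] {f : Q → X → E}
    {G : Set X} (hG : G.Finite) (hf : ∀ x ∈ G, Continuous fun q => f q x) :
    IsOpen {q | span 𝕜 (f q '' G) = ⊤} := by
  have : Finite G := hG
  simp only [image_eq_range]
  exact isOpen_setOf_span_range_eq_top.preimage
    (continuous_pi fun x : G => hf x x.2 : Continuous fun q (x : G) => f q x)

theorem ContinuousOn.span_image_closure {X : Type*} [TopologicalSpace X] {f : X → E} {s : Set X}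
    (hf : ContinuousOn f (closure s)) : span 𝕜 (f '' closure s) = span 𝕜 (f '' s) := by
  refine le_antisymm (span_le.2 ?_) (span_mono (image_mono subset_closure))
  exact hf.image_closure.trans
    (closure_minimal subset_span (span 𝕜 (f '' s)).closed_of_finiteDimensional)

theorem exists_finset_forall_span_image_eq_top {Q X : Type*} [TopologicalSpace Q]
    [CompactSpace Q] {f : Q → X → E} {S : Set X} (hf : ∀ x ∈ S, Continuous fun q => f q x)
    (hS : ∀ q, span 𝕜 (f q '' S) = ⊤) :
    ∃ G : Finset X, ↑G ⊆ S ∧ ∀ q, span 𝕜 (f q '' G) = ⊤ := by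
  classical
  choose G hGS hGfin hGspan using fun q => exists_finite_subset_span_image_eq_top (hS q)
  obtain ⟨T, hT⟩ := isCompact_univ.elim_finite_subcover
    (fun q => {q' | span 𝕜 (f q' '' G q) = ⊤})
    (fun q => isOpen_setOf_span_image_eq_top (hGfin q) fun x hx => hf x (hGS q hx))
    (fun q _ => mem_iUnion.2 ⟨q, hGspan q⟩)
  refine ⟨T.biUnion fun q => (hGfin q).toFinset, ?_, fun q => ?_⟩
  · simpa using fun q _ => hGS q
  · obtain ⟨q', hq'T, hq⟩ := mem_iUnion₂.1 (hT (mem_univ q))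
    refine eq_top_mono (span_mono (image_mono ?_)) hq
    intro x hx
    simpa using ⟨q', hq'T, hx⟩

end FiniteDimensional

theorem stmt_1_general
    (a b : ℝ) (ha : 0 ≤ a) (hab : a < b) (hb : b ≤ 1)
    (Q : Type) [TopologicalSpace Q] [CompactSpace Q]
    (n : ℕ)
    (f : Q → ℝ → EuclideanSpace ℂ (Fin n))
    (hf : ContinuousOn (fun p : Q × ℝ => f p.1 p.2) (univ ×ˢ Icc (0:ℝ) 1))
    (hfull : ∀ q : Q, Submodule.span ℂ (f q '' Icc a b) = ⊤) :
    ∃ N : ℕ, n ≤ N ∧ ∃ s : Fin N → ℝ, StrictMono s ∧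
      (∀ i, s i ∈ Ioo a b) ∧
      ∀ q : Q, Submodule.span ℂ (Set.range fun i => f q (s i)) = ⊤ := by
  have hIcc : Icc a b ⊆ Icc (0:ℝ) 1 := Icc_subset_Icc ha hb
  have hcont_q : ∀ x ∈ Icc a b, Continuous fun q => f q x := fun x hx =>
    continuousOn_univ.1 <| hf.comp (Continuous.prodMk_left x).continuousOn
      fun _ _ => ⟨mem_univ _, hIcc hx⟩
  have hfull_Ioo : ∀ q, span ℂ (f q '' Ioo a b) = ⊤ := fun q => by
    have hcont_t : ContinuousOn (f q) (Icc a b) :=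
      hf.comp (Continuous.prodMk_right q).continuousOn fun _ hx => ⟨mem_univ _, hIcc hx⟩
    rw [← closure_Ioo hab.ne] at hcont_t hfull
    rw [← hcont_t.span_image_closure, hfull]
  obtain ⟨G, hG, hGspan⟩ := exists_finset_forall_span_image_eq_top
    (fun x hx => hcont_q x (Ioo_subset_Icc_self hx)) hfull_Ioo
  obtain ⟨P, hP, hPcard⟩ := (Ioo_infinite hab).exists_subset_card_eq n
  set s := G ∪ P
  have hsub : ↑s ⊆ Ioo a b := by simpa [s] using And.intro hG hP
  refine ⟨s.card, hPcard ▸ Finset.card_le_card Finset.subset_union_right,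
    s.orderEmbOfFin rfl, (s.orderEmbOfFin rfl).strictMono,
    fun i => hsub (s.orderEmbOfFin_mem rfl i), fun q => ?_⟩
  rw [range_comp' (f q), Finset.range_orderEmbOfFin]
  exact eq_top_mono (span_mono (image_mono (by simp [s]))) (hGspan q)

/-- if `f : Q × I → ℂⁿ` is continuous and `f(q,·)` is full on the
nontrivial closed subinterval `I' = [a,b] ⊆ [0,1]` for every `q` in a compact Hausdorff
space `Q`, then there are `N ≥ n` points `s₁ < ⋯ < s_N` in the interior of `I'` with
`span{f(q,s₁),…,f(q,s_N)} = ℂⁿ` for all `q`. -/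
theorem stmt_1
    (a b : ℝ) (ha : 0 ≤ a) (hab : a < b) (hb : b ≤ 1)
    (Q : Type) [TopologicalSpace Q] [CompactSpace Q] [T2Space Q]
    (n : ℕ) (hn : 1 ≤ n)
    (f : Q → ℝ → EuclideanSpace ℂ (Fin n))
    (hf : ContinuousOn (fun p : Q × ℝ => f p.1 p.2) (univ ×ˢ Icc (0:ℝ) 1))
    (hfull : ∀ q : Q, Submodule.span ℂ (f q '' Icc a b) = ⊤) :
    ∃ N : ℕ, n ≤ N ∧ ∃ s : Fin N → ℝ, StrictMono s ∧
      (∀ i, s i ∈ Ioo a b) ∧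
      ∀ q : Q, Submodule.span ℂ (Set.range fun i => f q (s i)) = ⊤ :=
  stmt_1_general a b ha hab hb Q n f hf hfull
end

section
/- Let n ≥ 1 and let f : [0,1] × [0,1] → ℂⁿ be a continuous map such that for every t ∈ [0,1] the path f_t := f(t,·) : [0,1] → ℂⁿ is nowhere flat. Then there exist an integer N ≥ n and a partition 0 = s₀ < s₁ < ⋯ < s_N = 1 of [0,1] such that for every t ∈ [0,1] the vectors V_j(t) := ∫_{s_{j-1}}^{s_j} f(t,s) ds, j = 1, …, N, span ℂⁿ over ℂ. -/
/-!
If all integrals of `f t` over subintervals of `[0,1]` lay in a proper subspace `W`, then so would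
every derivative of `u ↦ ∫ x in s..u, f t x`, i.e. every value `f t s` with `0 < s < 1`; this
contradicts nowhere flatness. So for each `t` finitely many such integrals are linearly independent
and span `ℂⁿ`. Linear independence is an open condition and the integrals depend continuously on
`t`, so by compactness of `[0,1]` finitely many intervals serve all `t` at once. Their endpoints,
together with `0` and `1`, form the partition: every one of those integrals is a sum of integrals
over consecutive intervals of the partition.
-/

open MeasureTheory Set

/-- A path `f : [0,1] → ℂⁿ` is *nowhere flat* if for every proper affine complex subspace
`Σ ⊊ ℂⁿ` the set `{s ∈ [0,1] : f(s) ∈ Σ}` is nowhere dense in `[0,1]` (with its subspace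
topology). -/
def NowhereFlat {n : ℕ} (f : ℝ → EuclideanSpace ℂ (Fin n)) : Prop :=
  ∀ T : AffineSubspace ℂ (EuclideanSpace ℂ (Fin n)), T ≠ ⊤ →
    IsNowhereDense {s : Icc (0:ℝ) 1 | f ↑s ∈ T}

open Filter Topology Function

theorem mem_of_forall_intervalIntegral_mem {E : Type*} [NormedAddCommGroup E] [NormedSpace ℝ E]
    [CompleteSpace E] {g : ℝ → E} (hg : Continuous g) {K : Submodule ℝ E} (hK : IsClosed (K : Set E))
    {a b x : ℝ} (hx : x ∈ Ioo a b) (h : ∀ c ∈ Icc a b, ∀ d ∈ Icc a b, ∫ u in c..d, g u ∈ K) :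
    g x ∈ K := by
  refine hK.mem_of_tendsto
    (hasDerivAt_iff_tendsto_slope.1 (hg.integral_hasStrictDerivAt x x).hasDerivAt) ?_
  filter_upwards [nhdsWithin_le_nhds (Icc_mem_nhds hx.1 hx.2)] with y hy
  rw [slope_def_module, intervalIntegral.integral_same, sub_zero]
  exact K.smul_mem _ (h x (Ioo_subset_Icc_self hx) y hy)

namespace NowhereFlat

variable {n : ℕ} {g : ℝ → EuclideanSpace ℂ (Fin n)}

theorem congr {g' : ℝ → EuclideanSpace ℂ (Fin n)} (hg : NowhereFlat g) (h : EqOn g g' (Icc 0 1)) :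
    NowhereFlat g' := by
  intro T hT
  convert hg T hT using 3 with s
  rw [h s.2]

theorem eq_top_of_forall_mem (hg : NowhereFlat g) {W : Submodule ℂ (EuclideanSpace ℂ (Fin n))}
    (hW : ∀ x ∈ Ioo (0:ℝ) 1, g x ∈ W) : W = ⊤ := by
  by_contra hne
  have hT : W.toAffineSubspace ≠ ⊤ := fun h =>
    hne (by rw [← W.toAffineSubspace_direction, h, AffineSubspace.direction_top])
  let U : Set (Icc (0:ℝ) 1) := Subtype.val ⁻¹' Ioo 0 1
  have hU : U ⊆ interior (closure U) :=
    interior_maximal subset_closure (isOpen_Ioo.preimage continuous_subtype_val)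
  have hUflat : interior (closure U) = ∅ :=
    (hg _ hT).mono fun s (hs : s ∈ U) => W.mem_toAffineSubspace.2 (hW s hs)
  rw [hUflat] at hU
  exact hU (show (⟨1/2, by norm_num, by norm_num⟩ : Icc (0:ℝ) 1) ∈ U by norm_num [U])

theorem span_intervalIntegral_eq_top (hflat : NowhereFlat g) (hg : Continuous g) :
    Submodule.span ℂ (range fun p : Icc (0:ℝ) 1 × Icc (0:ℝ) 1 => ∫ u in p.1..p.2, g u) = ⊤ := by
  set W := Submodule.span ℂ (range fun p : Icc (0:ℝ) 1 × Icc (0:ℝ) 1 => ∫ u in p.1..p.2, g u)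
  refine hflat.eq_top_of_forall_mem fun x hx =>
    mem_of_forall_intervalIntegral_mem (K := W.restrictScalars ℝ) hg
      W.closed_of_finiteDimensional hx fun c hc d hd => ?_
  exact Submodule.subset_span ⟨(⟨c, hc⟩, ⟨d, hd⟩), rfl⟩

end NowhereFlat

section SpanningFamilies

variable {𝕜 E X ι : Type*} [NontriviallyNormedField 𝕜] [CompleteSpace 𝕜]
  [NormedAddCommGroup E] [NormedSpace 𝕜 E] [FiniteDimensional 𝕜 E] [TopologicalSpace X]

theorem exists_finset_eventually_span_image_eq_top {v : X → ι → E} {x₀ : X}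
    (hv : ∀ i, ContinuousAt (fun x => v x i) x₀)
    (h : Submodule.span 𝕜 (range (v x₀)) = ⊤) :
    ∃ J : Finset ι, ∀ᶠ x in 𝓝 x₀, Submodule.span 𝕜 (v x '' J) = ⊤ := by
  classical
  obtain ⟨κ, a, -, hspan, hli⟩ := exists_linearIndependent' 𝕜 (v x₀)
  have : Fintype κ := @Fintype.ofFinite κ hli.finite
  have hcont : ContinuousAt (fun x => v x ∘ a) x₀ := continuousAt_pi.2 fun k => hv (a k)
  refine ⟨Finset.univ.image a, ?_⟩
  filter_upwards [hcont.eventually hli.eventually] with x hx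
  have hrank : Module.finrank 𝕜 (Submodule.span 𝕜 (range (v x ∘ a))) = Module.finrank 𝕜 E := by
    rw [finrank_span_eq_card hx, ← finrank_span_eq_card hli, hspan, h, finrank_top]
  rw [eq_top_iff, ← Submodule.eq_top_of_finrank_eq hrank]
  refine Submodule.span_mono ?_
  rintro _ ⟨k, rfl⟩
  exact mem_image_of_mem _ (by simp)

theorem IsCompact.exists_finset_forall_span_image_eq_top {K : Set X} (hK : IsCompact K)
    {v : X → ι → E} (hv : ∀ i, Continuous fun x => v x i)
    (h : ∀ x ∈ K, Submodule.span 𝕜 (range (v x)) = ⊤) :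
    ∃ J : Finset ι, ∀ x ∈ K, Submodule.span 𝕜 (v x '' J) = ⊤ := by
  classical
  choose! J hJ using fun x (hx : x ∈ K) =>
    exists_finset_eventually_span_image_eq_top (fun i => (hv i).continuousAt) (h x hx)
  obtain ⟨T, hT⟩ := hK.elim_nhds_subcover' (fun x _ => {y | Submodule.span 𝕜 (v y '' J x) = ⊤})
    fun x hx => hJ x hx
  refine ⟨T.biUnion fun x => J x, fun y hy => ?_⟩
  obtain ⟨x, hxT, hyx⟩ := mem_iUnion₂.1 (hT hy)
  rw [eq_top_iff, ← hyx]
  exact Submodule.span_mono (image_mono fun i hi => Finset.mem_biUnion.2 ⟨x, hxT, hi⟩)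

end SpanningFamilies

theorem intervalIntegral_mem_span_partition {𝕜 E : Type*} [Ring 𝕜] [NormedAddCommGroup E]
    [NormedSpace ℝ E] [Module 𝕜 E] {N : ℕ} (s : Fin (N + 1) → ℝ) {g : ℝ → E}
    (hg : ∀ a b, IntervalIntegrable g volume a b) (i j : Fin (N + 1)) :
    ∫ u in s i..s j, g u ∈
      Submodule.span 𝕜 (range fun k : Fin N => ∫ u in s k.castSucc..s k.succ, g u) := by
  set W := Submodule.span 𝕜 (range fun k : Fin N => ∫ u in s k.castSucc..s k.succ, g u)
  have hfrom0 : ∀ j, ∫ u in s 0..s j, g u ∈ W := by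
    refine Fin.induction (by simp) fun k hk => ?_
    rw [← intervalIntegral.integral_add_adjacent_intervals (hg _ _) (hg _ _)]
    exact W.add_mem hk (Submodule.subset_span ⟨k, rfl⟩)
  rw [← intervalIntegral.integral_interval_sub_left (hg (s 0) (s j)) (hg (s 0) (s i))]
  exact W.sub_mem (hfrom0 j) (hfrom0 i)

theorem Finset.exists_strictMono_fin_range_eq {α : Type*} [LinearOrder α] {P : Finset α}
    {a b : α} (ha : IsLeast (P : Set α) a) (hb : IsGreatest (P : Set α) b) :
    ∃ (N : ℕ) (s : Fin (N + 1) → α),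
      s 0 = a ∧ s (Fin.last N) = b ∧ StrictMono s ∧ Set.range s = P := by
  have hne : P.Nonempty := ⟨a, ha.1⟩
  have hcard : P.card = P.card - 1 + 1 := (Nat.sub_add_cancel hne.card_pos).symm
  refine ⟨P.card - 1, P.orderEmbOfFin hcard, ?_, ?_, (P.orderEmbOfFin hcard).strictMono,
    P.range_orderEmbOfFin hcard⟩
  · exact (P.orderEmbOfFin_zero hcard (Nat.succ_pos _)).trans ((P.isLeast_min' hne).unique ha)
  · exact (P.orderEmbOfFin_last hcard (Nat.succ_pos _)).trans ((P.isGreatest_max' hne).unique hb)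

theorem exists_partition_span_intervalIntegral_eq_top {E : Type*} [NormedAddCommGroup E]
    [NormedSpace ℂ E] [FiniteDimensional ℂ E] {f : ℝ → ℝ → E} (hf : Continuous (uncurry f))
    (h : ∀ t ∈ Icc (0:ℝ) 1, Submodule.span ℂ
      (range fun p : Icc (0:ℝ) 1 × Icc (0:ℝ) 1 => ∫ u in p.1..p.2, f t u) = ⊤) :
    ∃ (N : ℕ) (s : Fin (N + 1) → ℝ), s 0 = 0 ∧ s (Fin.last N) = 1 ∧ StrictMono s ∧
      ∀ t ∈ Icc (0:ℝ) 1, Submodule.span ℂ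
        (range fun j : Fin N => ∫ u in s j.castSucc..s j.succ, f t u) = ⊤ := by
  obtain ⟨J, hJ⟩ := isCompact_Icc.exists_finset_forall_span_image_eq_top
    (v := fun t (p : Icc (0:ℝ) 1 × Icc (0:ℝ) 1) => ∫ u in p.1..p.2, f t u)
    (fun p => intervalIntegral.continuous_parametric_intervalIntegral_of_continuous' hf _ _) h
  set P : Finset ℝ := insert 0 (insert 1 (J.biUnion fun p => {(p.1 : ℝ), (p.2 : ℝ)}))
  have hP : ∀ x ∈ P, x ∈ Icc (0:ℝ) 1 := by
    simp only [P, Finset.mem_insert, Finset.mem_biUnion, Finset.mem_singleton]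
    rintro x (rfl | rfl | ⟨p, -, rfl | rfl⟩)
    exacts [left_mem_Icc.2 zero_le_one, right_mem_Icc.2 zero_le_one, p.1.2, p.2.2]
  obtain ⟨N, s, hs0, hs1, hmono, hrange⟩ := Finset.exists_strictMono_fin_range_eq (P := P)
    ⟨by simp [P], fun x hx => (hP x hx).1⟩ ⟨by simp [P], fun x hx => (hP x hx).2⟩
  refine ⟨N, s, hs0, hs1, hmono, fun t ht => ?_⟩
  rw [eq_top_iff, ← hJ t ht, Submodule.span_le]
  rintro _ ⟨p, hp, rfl⟩
  have hpP : (p.1 : ℝ) ∈ P ∧ (p.2 : ℝ) ∈ P := by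
    simp only [P, Finset.mem_insert, Finset.mem_biUnion]
    exact ⟨.inr (.inr ⟨p, hp, by simp⟩), .inr (.inr ⟨p, hp, by simp⟩)⟩
  obtain ⟨i, hi⟩ : (p.1 : ℝ) ∈ range s := hrange ▸ hpP.1
  obtain ⟨j, hj⟩ : (p.2 : ℝ) ∈ range s := hrange ▸ hpP.2
  dsimp only
  rw [← hi, ← hj]
  exact intervalIntegral_mem_span_partition s
    (fun a b => (hf.uncurry_left t).intervalIntegrable a b) i j

theorem stmt_4_general
    (n : ℕ)
    (f : ℝ → ℝ → EuclideanSpace ℂ (Fin n))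
    (hf : ContinuousOn (fun p : ℝ × ℝ => f p.1 p.2) (Icc 0 1 ×ˢ Icc 0 1))
    (hflat : ∀ t ∈ Icc (0:ℝ) 1, NowhereFlat (f t)) :
    ∃ N : ℕ, n ≤ N ∧ ∃ s : Fin (N + 1) → ℝ,
      s 0 = 0 ∧ s (Fin.last N) = 1 ∧ StrictMono s ∧
      ∀ t ∈ Icc (0:ℝ) 1,
        Submodule.span ℂ
          (Set.range fun j : Fin N => ∫ u in (s j.castSucc)..(s j.succ), f t u) = ⊤ := by
  -- Clamping to the square makes `f` continuous on `ℝ²` without changing its integrals over `[0,1]`.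
  set F : ℝ → ℝ → EuclideanSpace ℂ (Fin n) := fun t u =>
    f (projIcc 0 1 zero_le_one t) (projIcc 0 1 zero_le_one u)
  have hF : Continuous (uncurry F) :=
    hf.comp_continuous (f := fun p : ℝ × ℝ => ((projIcc 0 1 zero_le_one p.1 : ℝ),
      (projIcc 0 1 zero_le_one p.2 : ℝ))) (by fun_prop)
      fun p => ⟨(projIcc 0 1 zero_le_one p.1).2, (projIcc 0 1 zero_le_one p.2).2⟩
  have hFf : ∀ t ∈ Icc (0:ℝ) 1, EqOn (F t) (f t) (Icc 0 1) := fun t ht u hu => by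
    simp [F, projIcc_of_mem _ ht, projIcc_of_mem _ hu]
  obtain ⟨N, s, hs0, hs1, hmono, hspan⟩ := exists_partition_span_intervalIntegral_eq_top hF
    fun t ht =>
      ((hflat t ht).congr (hFf t ht).symm).span_intervalIntegral_eq_top (hF.uncurry_left t)
  have hsI : ∀ i, s i ∈ Icc (0:ℝ) 1 := fun i =>
    ⟨hs0 ▸ hmono.monotone (Fin.zero_le i), hs1 ▸ hmono.monotone (Fin.le_last i)⟩
  have hspan' : ∀ t ∈ Icc (0:ℝ) 1, Submodule.span ℂ
      (Set.range fun j : Fin N => ∫ u in (s j.castSucc)..(s j.succ), f t u) = ⊤ := fun t ht => by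
    rw [← hspan t ht]
    congr! 3 with j
    exact intervalIntegral.integral_congr ((hFf t ht).symm.mono (uIcc_subset_Icc (hsI _) (hsI _)))
  refine ⟨N, ?_, s, hs0, hs1, hmono, hspan'⟩
  have hrank := finrank_range_le_card (R := ℂ)
    fun j : Fin N => ∫ u in (s j.castSucc)..(s j.succ), f 0 u
  rwa [Set.finrank, hspan' 0 (left_mem_Icc.2 zero_le_one), finrank_top, finrank_euclideanSpace_fin,
    Fintype.card_fin] at hrank

/-- for a continuous family of nowhere flat paths `f(t,·) : [0,1] → ℂⁿ`
there is a partition `0 = s₀ < s₁ < ⋯ < s_N = 1` (with `N ≥ n`) such that the vectors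
`V_j(t) = ∫_{s_{j-1}}^{s_j} f(t,s) ds`, `j = 1,…,N`, span `ℂⁿ` for every `t ∈ [0,1]`. -/
theorem stmt_4
    (n : ℕ) (hn : 1 ≤ n)
    (f : ℝ → ℝ → EuclideanSpace ℂ (Fin n))
    (hf : ContinuousOn (fun p : ℝ × ℝ => f p.1 p.2) (Icc 0 1 ×ˢ Icc 0 1))
    (hflat : ∀ t ∈ Icc (0:ℝ) 1, NowhereFlat (f t)) :
    ∃ N : ℕ, n ≤ N ∧ ∃ s : Fin (N + 1) → ℝ,
      s 0 = 0 ∧ s (Fin.last N) = 1 ∧ StrictMono s ∧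
      ∀ t ∈ Icc (0:ℝ) 1,
        Submodule.span ℂ
          (Set.range fun j : Fin N => ∫ u in (s j.castSucc)..(s j.succ), f t u) = ⊤ :=
  stmt_4_general n f hf hflat
end

section
/- Let I' be a nontrivial closed subinterval of I = [0,1], and let f : I → ℂ and a : I → ℂ \ {0} be continuous functions such that f is not constant on I'. Then there exist an integer N ≥ 2 and continuous functions g₁, …, g_N : I → ℂ, each vanishing identically on I \ I', such that, setting h(ζ,s) := ∏_{i=1}^N (1 + ζᵢ gᵢ(s)) for ζ ∈ ℂᴺ and s ∈ I, the derivative at ζ = 0 of the map ℂᴺ ∋ ζ ↦ ∫₀¹ a(s) (h(ζ,s) f(s), h(ζ,s)² f(s)²) ds ∈ ℂ² is a surjective ℂ-linear map ℂᴺ → ℂ². -/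
/-!
Differentiating under the integral sign, the derivative at `ζ = 0` sends `ζ` to
`∑ ζᵢ • ∫ a gᵢ (f, 2 f²)`, so it suffices that the linear map `g ↦ ∫ a g (f, 2 f²)` on continuous
functions supported in `I'` be onto `ℂ²`; then `N = 2` multipliers with images `(1, 0)` and
`(0, 1)` do the job. If it were not onto, some nonzero functional `φ` would vanish on its range,
i.e. `∫ g · a φ(f, 2 f²) = 0` for every such `g`. Hence `a φ(f, 2 f²) = 0` on `I'`, and since
`a ≠ 0` the continuous function `f` takes values on `I'` among the finitely many roots of a
nonzero polynomial of degree at most two, forcing it to be constant on the connected set `I'`.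
-/

open MeasureTheory Set Metric Function ComplexConjugate Polynomial

theorem ContinuousOn.exists_continuous_eqOn_Icc {E : Type*} [TopologicalSpace E] {u : ℝ → E}
    {a b : ℝ} (hab : a ≤ b) (hu : ContinuousOn u (Icc a b)) :
    ∃ v : ℝ → E, Continuous v ∧ EqOn v u (Icc a b) :=
  ⟨IccExtend hab ((Icc a b).domRestrict u), continuous_IccExtend_iff.2 hu.domRestrict,
    fun _ hx => IccExtend_of_mem hab _ hx⟩

theorem IsPreconnected.constant_of_isRoot {X K : Type*} [TopologicalSpace X] [CommRing K]
    [IsDomain K] [TopologicalSpace K] [T1Space K] {S : Set X} (hS : IsPreconnected S)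
    {p : K[X]} (hp : p ≠ 0) {f : X → K} (hf : ContinuousOn f S)
    (hroot : ∀ x ∈ S, p.IsRoot (f x)) {x y : X} (hx : x ∈ S) (hy : y ∈ S) : f x = f y :=
  hS.constant_of_mapsTo (finite_setOfPred_isRoot hp).isDiscrete hf hroot hx hy

theorem hasFDerivAt_intervalIntegral_of_continuous {𝕜 H E : Type*} [RCLike 𝕜]
    [NormedAddCommGroup H] [NormedSpace 𝕜 H] [ProperSpace H]
    [NormedAddCommGroup E] [NormedSpace ℝ E] [NormedSpace 𝕜 E]
    {F : H → ℝ → E} {F' : H → ℝ → H →L[𝕜] E} {a b : ℝ} (x₀ : H)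
    (hF : Continuous (uncurry F)) (hF' : Continuous (uncurry F'))
    (hdiff : ∀ x t, HasFDerivAt (F · t) (F' x t) x) :
    HasFDerivAt (fun x => ∫ t in a..b, F x t) (∫ t in a..b, F' x₀ t) x₀ := by
  obtain ⟨C, hC⟩ := ((isCompact_closedBall x₀ 1).prod isCompact_uIcc).exists_bound_of_continuousOn
    hF'.continuousOn (E := H →L[𝕜] E) (s := closedBall x₀ 1 ×ˢ uIcc a b)
  exact intervalIntegral.hasFDerivAt_integral_of_dominated_of_fderiv_le (bound := fun _ => C)
    (ball_mem_nhds x₀ one_pos)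
    (Filter.Eventually.of_forall fun x => (hF.comp (.prodMk_right x)).aestronglyMeasurable)
    ((hF.comp (.prodMk_right x₀)).intervalIntegrable _ _)
    (hF'.comp (.prodMk_right x₀)).aestronglyMeasurable
    (ae_of_all _ fun t ht x hx => hC (x, t) ⟨ball_subset_closedBall hx, uIoc_subset_uIcc ht⟩)
    intervalIntegrable_const (ae_of_all _ fun t _ x _ => hdiff x t)

theorem eqOn_zero_of_forall_integral_mul_eq_zero {u : ℝ → ℂ} {p q c d : ℝ}
    (hu : Continuous u) (hpc : p ≤ c) (hcd : c < d) (hdq : d ≤ q)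
    (h : ∀ g : ℝ → ℂ, Continuous g → support g ⊆ Icc c d → ∫ s in p..q, g s * u s = 0) :
    EqOn u 0 (Icc c d) := by
  -- test against `g = ψ · conj u`, with `ψ` a bump positive exactly on `(c, d)`
  set ψ : ℝ → ℝ := fun s => max 0 ((s - c) * (d - s))
  have hψ_pos : ∀ s ∈ Ioo c d, 0 < ψ s := fun s hs =>
    lt_max_of_lt_right (mul_pos (sub_pos.2 hs.1) (sub_pos.2 hs.2))
  have hψ_supp : support ψ ⊆ Icc c d := by
    intro s hs
    by_contra hs'
    rw [mem_Icc, not_and_or, not_le, not_le] at hs'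
    refine hs (max_eq_left ?_)
    rcases hs' with h | h
    · exact mul_nonpos_of_nonpos_of_nonneg (by linarith) (by linarith)
    · exact mul_nonpos_of_nonneg_of_nonpos (by linarith) (by linarith)
  set F : ℝ → ℝ := fun s => ψ s * ‖u s‖ ^ 2
  have hF : Continuous F := by fun_prop
  have hF_int : ∫ s in p..q, F s = 0 := by
    have := h (fun s => ψ s * conj (u s)) (by fun_prop) fun s hs =>
      hψ_supp (by simpa using left_ne_zero_of_mul hs)
    rw [← Complex.ofReal_inj, ← intervalIntegral.integral_ofReal, Complex.ofReal_zero, ← this]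
    congr 1 with s
    simp [F, mul_assoc, Complex.conj_mul']
  have hF_ae : F =ᵐ[volume.restrict (Ioc p q)] 0 :=
    (intervalIntegral.integral_eq_zero_iff_of_le_of_nonneg_ae (by linarith)
      (ae_of_all _ fun s => by positivity) (hF.intervalIntegrable _ _)).1 hF_int
  have hF_zero : EqOn F 0 (Ioo c d) :=
    Measure.eqOn_open_of_ae_eq (ae_restrict_of_ae_restrict_of_subset
      (Ioo_subset_Ioc_self.trans (Ioc_subset_Ioc hpc hdq)) hF_ae) isOpen_Ioo
      hF.continuousOn continuousOn_const
  have hu_zero : EqOn u 0 (Ioo c d) := fun s hs => by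
    simpa [F, (hψ_pos s hs).ne'] using hF_zero hs
  rw [← closure_Ioo hcd.ne]
  exact hu_zero.of_subset_closure hu.continuousOn continuousOn_const subset_closure subset_rfl

noncomputable def firstVariation (a f g : ℝ → ℂ) : ℂ × ℂ :=
  ∫ s in (0:ℝ)..1, (a s * g s) • (f s, 2 * f s ^ 2)

def continuousSupportedIn (K : Set ℝ) : Submodule ℂ (ℝ → ℂ) where
  carrier := {g | Continuous g ∧ support g ⊆ K}
  add_mem' hg hh := ⟨hg.1.add hh.1, (support_add _ _).trans (union_subset hg.2 hh.2)⟩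
  zero_mem' := ⟨continuous_const, by simp⟩
  smul_mem' k _ hg := ⟨hg.1.const_smul k, (support_const_smul_subset k _).trans hg.2⟩

noncomputable def firstVariationₗ {a f : ℝ → ℂ} (ha : Continuous a) (hf : Continuous f)
    (K : Set ℝ) : continuousSupportedIn K →ₗ[ℂ] ℂ × ℂ where
  toFun g := firstVariation a f g
  map_add' g h := by
    have hg := g.2.1
    have hh := h.2.1
    simp only [firstVariation, Submodule.coe_add, Pi.add_apply, mul_add, add_smul]
    exact intervalIntegral.integral_add (Continuous.intervalIntegrable (by fun_prop) _ _)
      (Continuous.intervalIntegrable (by fun_prop) _ _)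
  map_smul' k g := by
    simp only [firstVariation, Submodule.coe_smul, Pi.smul_apply, smul_eq_mul,
      mul_left_comm _ k, mul_smul]
    exact intervalIntegral.integral_smul _ _

theorem firstVariationₗ_surjective {a f : ℝ → ℂ} (ha : Continuous a) (hf : Continuous f)
    {c d : ℝ} (hc : 0 ≤ c) (hcd : c < d) (hd : d ≤ 1) (ha0 : ∀ s ∈ Icc c d, a s ≠ 0)
    (hnc : ∃ s₁ ∈ Icc c d, ∃ s₂ ∈ Icc c d, f s₁ ≠ f s₂) :
    Surjective (firstVariationₗ ha hf (Icc c d)) := by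
  rw [← LinearMap.range_eq_top]
  by_contra hne
  obtain ⟨φ, hφ, hker⟩ := (LinearMap.range _).exists_le_ker_of_lt_top (lt_top_iff_ne_top.2 hne)
  have hφ_apply : ∀ x y, φ (x, y) = φ (1, 0) * x + φ (0, 1) * y := fun x y => by
    rw [show ((x, y) : ℂ × ℂ) = x • (1, 0) + y • (0, 1) by ext <;> simp, map_add, map_smul,
      map_smul, smul_eq_mul, smul_eq_mul, mul_comm x, mul_comm y]
  have hφ_int : ∀ g : ℝ → ℂ, Continuous g → support g ⊆ Icc c d →
      ∫ s in (0:ℝ)..1, g s * (a s * φ (f s, 2 * f s ^ 2)) = 0 := fun g hg hsupp => by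
    rw [← LinearMap.mem_ker.1 (hker (LinearMap.mem_range_self _ ⟨g, hg, hsupp⟩))]
    change _ = φ.toContinuousLinearMap (∫ s in (0:ℝ)..1, (a s * g s) • (f s, 2 * f s ^ 2))
    rw [← ContinuousLinearMap.intervalIntegral_comp_comm _
      (Continuous.intervalIntegrable (by fun_prop) _ _)]
    refine intervalIntegral.integral_congr fun s _ => ?_
    simp only [LinearMap.coe_toContinuousLinearMap', map_smul, smul_eq_mul]
    ring
  have hroot : ∀ s ∈ Icc c d, (C (φ (1, 0)) * X + C (2 * φ (0, 1)) * X ^ 2).IsRoot (f s) := by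
    intro s hs
    have := (mul_eq_zero.1 (eqOn_zero_of_forall_integral_mul_eq_zero (by fun_prop) hc hcd hd
      hφ_int hs)).resolve_left (ha0 s hs)
    rw [hφ_apply] at this
    simp only [IsRoot, eval_add, eval_mul, eval_C, eval_X, eval_pow]
    linear_combination this
  have hp : C (φ (1, 0)) * X + C (2 * φ (0, 1)) * X ^ 2 ≠ 0 := by
    intro h
    have h1 := congr_arg (coeff · 1) h
    have h2 := congr_arg (coeff · 2) h
    simp only [coeff_add, coeff_C_mul_X, coeff_C_mul_X_pow, coeff_zero] at h1 h2
    norm_num at h1 h2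
    refine hφ (LinearMap.ext fun ⟨x, y⟩ => ?_)
    rw [hφ_apply, h1, h2]
    simp
  obtain ⟨s₁, hs₁, s₂, hs₂, hne⟩ := hnc
  exact hne (isPreconnected_Icc.constant_of_isRoot hp hf.continuousOn hroot hs₁ hs₂)

theorem hasFDerivAt_integral_multiplier {ι : Type*} [Fintype ι] [DecidableEq ι]
    {a f : ℝ → ℂ} {g : ι → ℝ → ℂ} (ha : Continuous a) (hf : Continuous f)
    (hg : ∀ i, Continuous (g i)) :
    HasFDerivAt
      (fun ζ : ι → ℂ => ∫ s in (0:ℝ)..1,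
        (a s * (∏ i, (1 + ζ i * g i s)) * f s, a s * (∏ i, (1 + ζ i * g i s)) ^ 2 * f s ^ 2))
      (∑ i, (ContinuousLinearMap.proj (R := ℂ) (φ := fun _ : ι => ℂ) i).smulRight
        (firstVariation a f (g i))) 0 := by
  set P : (ι → ℂ) → ℝ → ℂ := fun ζ s => ∏ i, (1 + ζ i * g i s)
  set P' : (ι → ℂ) → ℝ → (ι → ℂ) →L[ℂ] ℂ := fun ζ s =>
    ∑ i, (∏ j ∈ Finset.univ.erase i, (1 + ζ j * g j s)) • g i s • ContinuousLinearMap.proj i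
  have hP : ∀ ζ s, HasFDerivAt (P · s) (P' ζ s) ζ := fun ζ s => by
    simpa using HasFDerivAt.finsetProd (u := Finset.univ) fun i _ =>
      ((ContinuousLinearMap.proj (R := ℂ) (φ := fun _ : ι => ℂ) i).hasFDerivAt.mul_const
        (g i s)).const_add 1
  have hQ : ∀ z s, HasDerivAt (fun z => (a s * z * f s, a s * z ^ 2 * f s ^ 2))
      (a s * f s, a s * (2 * z) * f s ^ 2) z := fun z s => by
    simpa using (((hasDerivAt_id z).const_mul (a s)).mul_const (f s)).prodMk
      (((hasDerivAt_pow 2 z).const_mul (a s)).mul_const (f s ^ 2))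
  have hD := hasFDerivAt_intervalIntegral_of_continuous (a := 0) (b := 1) (0 : ι → ℂ)
    (F := fun ζ s => (a s * P ζ s * f s, a s * P ζ s ^ 2 * f s ^ 2))
    (F' := fun ζ s => (P' ζ s).smulRight (a s * f s, a s * (2 * P ζ s) * f s ^ 2))
    (by fun_prop) (by fun_prop) fun ζ s =>
      ((hQ (P ζ s) s).hasFDerivAt.comp ζ (hP ζ s)).congr_fderiv (by ext <;> simp)
  refine hD.congr_fderiv (ContinuousLinearMap.ext fun ζ => ?_)
  rw [ContinuousLinearMap.intervalIntegral_apply ((by fun_prop : Continuous fun t =>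
    (P' 0 t).smulRight (a t * f t, a t * (2 * P 0 t) * f t ^ 2)).intervalIntegrable _ _)]
  simp only [FunLike.coe_sum, Finset.sum_apply, ContinuousLinearMap.smulRight_apply,
    smul_apply, ContinuousLinearMap.proj_apply, firstVariation, P, P',
    Pi.zero_apply, zero_mul, add_zero, Finset.prod_const_one, one_smul, mul_one]
  simp_rw [← intervalIntegral.integral_smul]
  rw [← intervalIntegral.integral_finsetSum fun i _ =>
    Continuous.intervalIntegrable (by fun_prop) _ _]
  refine intervalIntegral.integral_congr fun t _ => ?_
  simp only [Finset.sum_smul, smul_smul]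
  refine Finset.sum_congr rfl fun i _ => ?_
  ext <;> simp only [smul_eq_mul, Prod.smul_mk] <;> ring

/-- Lemma 6.5 of the paper: period dominating multipliers for the map
`s ↦ a(s)(f(s), f(s)²)`. Here `I' = [c,d]` is a nontrivial closed subinterval of `[0,1]`,
`f` is not constant on `I'`, and `a` vanishes nowhere. -/
theorem stmt_7
    (c d : ℝ) (hc : 0 ≤ c) (hcd : c < d) (hd : d ≤ 1)
    (f a : ℝ → ℂ)
    (hf : ContinuousOn f (Icc (0:ℝ) 1))
    (hac : ContinuousOn a (Icc (0:ℝ) 1))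
    (ha0 : ∀ s ∈ Icc (0:ℝ) 1, a s ≠ 0)
    (hnc : ∃ s₁ ∈ Icc c d, ∃ s₂ ∈ Icc c d, f s₁ ≠ f s₂) :
    ∃ N : ℕ, 2 ≤ N ∧ ∃ g : Fin N → ℝ → ℂ,
      (∀ i, ContinuousOn (g i) (Icc (0:ℝ) 1)) ∧
      (∀ i, ∀ s ∈ Icc (0:ℝ) 1 \ Icc c d, g i s = 0) ∧
      ∃ D : (Fin N → ℂ) →L[ℂ] (ℂ × ℂ),
        HasFDerivAt
          (fun ζ : Fin N → ℂ =>
            ∫ s in (0:ℝ)..1,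
              (a s * (∏ i, (1 + ζ i * g i s)) * f s,
               a s * (∏ i, (1 + ζ i * g i s)) ^ 2 * (f s) ^ 2)) D 0 ∧
        Function.Surjective D := by
  obtain ⟨a', ha', haa'⟩ := hac.exists_continuous_eqOn_Icc zero_le_one
  obtain ⟨f', hf', hff'⟩ := hf.exists_continuous_eqOn_Icc zero_le_one
  have hsub : Icc c d ⊆ Icc (0:ℝ) 1 := Icc_subset_Icc hc hd
  have hsurj := firstVariationₗ_surjective ha' hf' hc hcd hd
    (fun s hs => by rw [haa' (hsub hs)]; exact ha0 s (hsub hs))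
    (by
      obtain ⟨s₁, hs₁, s₂, hs₂, hne⟩ := hnc
      exact ⟨s₁, hs₁, s₂, hs₂, by rwa [hff' (hsub hs₁), hff' (hsub hs₂)]⟩)
  obtain ⟨g₀, hg₀ : firstVariation a' f' g₀ = (1, 0)⟩ := hsurj (1, 0)
  obtain ⟨g₁, hg₁ : firstVariation a' f' g₁ = (0, 1)⟩ := hsurj (0, 1)
  have hg : ∀ i, ![(g₀ : ℝ → ℂ), g₁] i ∈ continuousSupportedIn (Icc c d) := by
    intro i
    fin_cases i
    exacts [g₀.2, g₁.2]
  refine ⟨2, le_rfl, ![g₀, g₁], fun i => (hg i).1.continuousOn,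
    fun i s hs => notMem_support.1 fun h => hs.2 ((hg i).2 h), _,
    (hasFDerivAt_integral_multiplier ha' hf' fun i => (hg i).1).congr_of_eventuallyEq
      (Filter.Eventually.of_forall fun ζ => intervalIntegral.integral_congr fun s hs => ?_),
    fun v => ⟨![v.1, v.2], by simp [hg₀, hg₁]⟩⟩
  rw [uIcc_of_le zero_le_one] at hs
  simp [haa' hs, hff' hs]
end

section
/- Let f : [0,1] → ℂ and a : [0,1] → ℂ \ {0} be continuous functions with f nonconstant, and let x₁, x₂ ∈ ℂ. Then there exists a continuous function h : [0,1] → ℂ \ {0} such that h(0) = h(1) = 1 and ∫₀¹ a(s) (h(s) f(s), h(s)² f(s)²) ds = (x₁, x₂). -/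
/-!
Take `h = ∏ᵢ (1 + wᵢ Tᵢ)` for four tents `Tᵢ` with disjoint supports near a point `s₀` where
`a f ≠ 0`. On the support of `Tᵢ`, `h` runs along the segment from `1` to `1 + wᵢ`, so `h` has
no zero as soon as every `1 + wᵢ` lies in the slit plane. Up to constants the two integrals are
`∑ wᵢ Aᵢ` and `∑ (2 wᵢ Bᵢ + wᵢ² Cᵢ)` with `Aᵢ = ∫ a f Tᵢ`, `Bᵢ = ∫ a f² Tᵢ`, `Cᵢ = ∫ a f² Tᵢ²`.
Moving a pair of coefficients along a line on which the linear expression is fixed turns the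
quadratic one into a nonconstant quadratic polynomial of one complex parameter, which by the open
mapping theorem sends the dense open set of admissible parameters onto a dense open set. The
values of two such pairs can therefore be made to add up to any target. The leading coefficients
`Cᵢ Aⱼ² + Cⱼ Aᵢ²` do not vanish for narrow tents, because the rescaled moments tend to
`(a f)(s₀)` and `(a f²)(s₀)` times moments of the standard tent.
-/

open MeasureTheory Set Filter Topology

theorem Complex.dense_slitPlane : Dense Complex.slitPlane :=
  ((dense_compl_singleton (0 : ℝ)).preimage Complex.isOpenMap_im).mono
    fun _ hz => Complex.mem_slitPlane_iff.2 (Or.inr hz)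

theorem one_add_mul_ofReal_mem_slitPlane {w : ℂ} (hw : 1 + w ∈ Complex.slitPlane) {t : ℝ}
    (ht₀ : 0 ≤ t) (ht₁ : t ≤ 1) : 1 + w * t ∈ Complex.slitPlane := by
  simpa [Complex.real_smul, mul_comm] using
    Complex.starConvex_one_slitPlane.add_smul_mem hw ht₀ ht₁

theorem Complex.surjective_quadratic {κ : ℂ} (hκ : κ ≠ 0) (b c : ℂ) :
    Function.Surjective fun t : ℂ => κ * t ^ 2 + b * t + c := by
  intro v
  obtain ⟨t, ht⟩ :=
    exists_quadratic_eq_zero hκ (IsAlgClosed.exists_eq_mul_self (discrim κ b (c - v)))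
  exact ⟨t, by linear_combination ht⟩

theorem Differentiable.isOpen_and_dense_image_of_surjective {g : ℂ → ℂ}
    (hg : Differentiable ℂ g) (hsurj : Function.Surjective g) {G : Set ℂ} (hGo : IsOpen G)
    (hGd : Dense G) : IsOpen (g '' G) ∧ Dense (g '' G) := by
  refine ⟨?_, hsurj.denseRange.dense_image hg.continuous hGd⟩
  rcases (hg.differentiableOn.analyticOnNhd isOpen_univ).is_constant_or_isOpenMap with
    ⟨w, hw⟩ | hopen
  · obtain ⟨z, hz⟩ := hsurj (w + 1)
    exact absurd (hz.symm.trans (hw z)) (by simp)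
  · exact hopen G hGo

theorem isOpen_and_dense_setOf_one_add_affine_mem_slitPlane (u : ℂ) {k : ℂ} (hk : k ≠ 0) :
    IsOpen {t : ℂ | 1 + (u + k * t) ∈ Complex.slitPlane} ∧
      Dense {t : ℂ | 1 + (u + k * t) ∈ Complex.slitPlane} := by
  have hopen : IsOpenMap fun t : ℂ => 1 + (u + k * t) :=
    (isOpenMap_add_left 1).comp ((isOpenMap_add_left u).comp (isOpenMap_smul₀ hk))
  exact ⟨Complex.isOpen_slitPlane.preimage (by fun_prop),
    Complex.dense_slitPlane.preimage hopen⟩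

theorem exists_isOpen_dense_quadratic_values_on_line {A A' C C' : ℂ} (B B' : ℂ) (hA : A ≠ 0)
    (hA' : A' ≠ 0) (hC : C * A' ^ 2 + C' * A ^ 2 ≠ 0) (c : ℂ) :
    ∃ O : Set ℂ, IsOpen O ∧ Dense O ∧ ∀ q ∈ O, ∃ u v : ℂ,
      1 + u ∈ Complex.slitPlane ∧ 1 + v ∈ Complex.slitPlane ∧ A * u + A' * v = c ∧
        2 * u * B + u ^ 2 * C + 2 * v * B' + v ^ 2 * C' = q := by
  set u : ℂ → ℂ := fun t => c / A + A' * t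
  set v : ℂ → ℂ := fun t => 0 + -A * t
  set Q : ℂ → ℂ := fun t => 2 * u t * B + u t ^ 2 * C + 2 * v t * B' + v t ^ 2 * C'
  have hQ : Q = fun t => (C * A' ^ 2 + C' * A ^ 2) * t ^ 2
      + (2 * A' * B + 2 * c / A * A' * C - 2 * A * B') * t + (2 * c / A * B + (c / A) ^ 2 * C) := by
    ext t; simp only [Q, u, v]; ring
  have hu := isOpen_and_dense_setOf_one_add_affine_mem_slitPlane (c / A) hA'
  have hv := isOpen_and_dense_setOf_one_add_affine_mem_slitPlane 0 (neg_ne_zero.2 hA)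
  have hQG := (show Differentiable ℂ Q by fun_prop).isOpen_and_dense_image_of_surjective
    (hQ ▸ Complex.surjective_quadratic hC _ _) (hu.1.inter hv.1)
    (hu.2.inter_of_isOpen_left hv.2 hu.1)
  refine ⟨_, hQG.1, hQG.2, ?_⟩
  rintro - ⟨t, ⟨hut, hvt⟩, rfl⟩
  refine ⟨u t, v t, hut, hvt, ?_, rfl⟩
  simp only [u, v]
  field_simp
  ring

theorem exists_slitPlane_solution (A B C : Fin 4 → ℂ) (hA : ∀ i, A i ≠ 0)
    (h01 : C 0 * A 1 ^ 2 + C 1 * A 0 ^ 2 ≠ 0) (h23 : C 2 * A 3 ^ 2 + C 3 * A 2 ^ 2 ≠ 0)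
    (c₁ c₂ : ℂ) :
    ∃ w : Fin 4 → ℂ, (∀ i, 1 + w i ∈ Complex.slitPlane) ∧ ∑ i, w i * A i = c₁ ∧
      ∑ i, (2 * w i * B i + w i ^ 2 * C i) = c₂ := by
  obtain ⟨O₁, hO₁, hO₁d, hsol₁⟩ :=
    exists_isOpen_dense_quadratic_values_on_line (B 0) (B 1) (hA 0) (hA 1) h01 0
  obtain ⟨O₂, hO₂, hO₂d, hsol₂⟩ :=
    exists_isOpen_dense_quadratic_values_on_line (B 2) (B 3) (hA 2) (hA 3) h23 c₁
  have hO₁' : Dense ((c₂ - ·) ⁻¹' O₁) := hO₁d.preimage (Homeomorph.subLeft c₂).isOpenMap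
  obtain ⟨q, hq₁, hq₂⟩ := (hO₁'.inter_of_isOpen_right hO₂d hO₂).nonempty
  obtain ⟨u₀, v₀, hu₀, hv₀, hlin₀, hquad₀⟩ := hsol₁ _ hq₁
  obtain ⟨u₁, v₁, hu₁, hv₁, hlin₁, hquad₁⟩ := hsol₂ _ hq₂
  refine ⟨![u₀, v₀, u₁, v₁], fun i => ?_, ?_, ?_⟩
  · fin_cases i <;> assumption
  · simp only [Fin.sum_univ_four, Matrix.cons_val_zero, Matrix.cons_val_one, Matrix.cons_val]
    linear_combination hlin₀ + hlin₁
  · simp only [Fin.sum_univ_four, Matrix.cons_val_zero, Matrix.cons_val_one, Matrix.cons_val]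
    linear_combination hquad₀ + hquad₁

theorem Finset.prod_one_add_of_pairwise_mul_eq_zero {ι R : Type*} [CommSemiring R]
    [DecidableEq ι] {y : ι → R} (hy : Pairwise fun i j => y i * y j = 0) (s : Finset ι) :
    ∏ i ∈ s, (1 + y i) = 1 + ∑ i ∈ s, y i := by
  induction s using Finset.induction_on with
  | empty => simp
  | insert a s ha ih =>
    have hzero : y a * ∑ i ∈ s, y i = 0 := by
      rw [Finset.mul_sum]
      exact Finset.sum_eq_zero fun i hi => hy (ne_of_mem_of_not_mem hi ha).symm
    rw [Finset.prod_insert ha, Finset.sum_insert ha, ih]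
    calc (1 + y a) * (1 + ∑ i ∈ s, y i) = 1 + (y a + ∑ i ∈ s, y i) + y a * ∑ i ∈ s, y i := by ring
      _ = 1 + (y a + ∑ i ∈ s, y i) := by rw [hzero, add_zero]

theorem intervalIntegral.integral_mul_prod_one_add {ι : Type*} [Fintype ι] {F : ℝ → ℂ}
    {y : ι → ℝ → ℂ} (hF : Continuous F) (hy : ∀ i, Continuous (y i))
    (hdisj : ∀ s, Pairwise fun i j => y i s * y j s = 0) (a b : ℝ) :
    ∫ s in a..b, F s * ∏ i, (1 + y i s) = (∫ s in a..b, F s) + ∑ i, ∫ s in a..b, F s * y i s := by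
  classical
  simp_rw [Finset.prod_one_add_of_pairwise_mul_eq_zero (hdisj _), mul_add, mul_one, Finset.mul_sum]
  rw [intervalIntegral.integral_add (hF.intervalIntegrable _ _),
    intervalIntegral.integral_finsetSum]
  · exact fun i _ => (hF.mul (hy i)).intervalIntegrable _ _
  · exact (continuous_finsetSum _ fun i _ => hF.mul (hy i)).intervalIntegrable _ _

section DisjointFamily

variable {ι : Type*} [Fintype ι] {F : ℝ → ℂ} {T : ι → ℝ → ℂ}

theorem intervalIntegral.integral_mul_prod_one_add_mul (hF : Continuous F)
    (hT : ∀ i, Continuous (T i)) (hdisj : ∀ s, Pairwise fun i j => T i s * T j s = 0)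
    (w : ι → ℂ) (a b : ℝ) :
    ∫ s in a..b, F s * ∏ i, (1 + w i * T i s)
      = (∫ s in a..b, F s) + ∑ i, w i * ∫ s in a..b, F s * T i s := by
  rw [intervalIntegral.integral_mul_prod_one_add (y := fun i s => w i * T i s) hF
    (fun i => continuous_const.mul (hT i))
    (fun s i j hij => by beta_reduce; rw [mul_mul_mul_comm, hdisj s hij, mul_zero])]
  simp_rw [mul_left_comm _ (w _), intervalIntegral.integral_const_mul]

theorem intervalIntegral.integral_mul_prod_one_add_mul_sq (hF : Continuous F)
    (hT : ∀ i, Continuous (T i)) (hdisj : ∀ s, Pairwise fun i j => T i s * T j s = 0)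
    (w : ι → ℂ) (a b : ℝ) :
    ∫ s in a..b, F s * (∏ i, (1 + w i * T i s)) ^ 2
      = (∫ s in a..b, F s) + ∑ i, (2 * w i * (∫ s in a..b, F s * T i s)
          + w i ^ 2 * ∫ s in a..b, F s * T i s ^ 2) := by
  have hsq : ∀ s, (∏ i, (1 + w i * T i s)) ^ 2
      = ∏ i, (1 + (2 * w i * T i s + w i ^ 2 * T i s ^ 2)) :=
    fun s => by rw [← Finset.prod_pow]; exact Finset.prod_congr rfl fun i _ => by ring
  simp_rw [hsq]
  rw [intervalIntegral.integral_mul_prod_one_add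
    (y := fun i s => 2 * w i * T i s + w i ^ 2 * T i s ^ 2) hF
    (fun i => by have := hT i; fun_prop)
    (fun s i j hij => by
      beta_reduce
      linear_combination ((2 * w i + w i ^ 2 * T i s) * (2 * w j + w j ^ 2 * T j s)) * hdisj s hij)]
  congr 1
  refine Finset.sum_congr rfl fun i _ => ?_
  simp_rw [mul_add]
  have := hT i
  rw [intervalIntegral.integral_add (Continuous.intervalIntegrable (by fun_prop) _ _)
    (Continuous.intervalIntegrable (by fun_prop) _ _)]
  simp_rw [mul_left_comm (F _), intervalIntegral.integral_const_mul]

end DisjointFamily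

theorem intervalIntegral.integral_pair {E F : Type*} [NormedAddCommGroup E] [NormedSpace ℝ E]
    [CompleteSpace E] [NormedAddCommGroup F] [NormedSpace ℝ F] [CompleteSpace F]
    {f : ℝ → E} {g : ℝ → F} {a b : ℝ} {μ : Measure ℝ} (hf : IntervalIntegrable f μ a b)
    (hg : IntervalIntegrable g μ a b) :
    ∫ x in a..b, (f x, g x) ∂μ = (∫ x in a..b, f x ∂μ, ∫ x in a..b, g x ∂μ) := by
  simp only [intervalIntegral, _root_.integral_pair hf.1 hg.1, _root_.integral_pair hf.2 hg.2,
    Prod.mk_sub_mk]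

theorem exists_mem_Ioo_ne_zero {E : Type*} [TopologicalSpace E] [T2Space E] [Zero E]
    {f : ℝ → E} {a b : ℝ} (hab : a < b) (hf : ContinuousOn f (Icc a b))
    (hne : ∃ s ∈ Icc a b, f s ≠ 0) : ∃ s ∈ Ioo a b, f s ≠ 0 := by
  by_contra! h
  obtain ⟨s, hs, hfs⟩ := hne
  exact hfs (Set.EqOn.of_subset_closure h hf continuousOn_const Ioo_subset_Icc_self
    (closure_Ioo hab.ne).ge hs)

noncomputable def tent (x : ℝ) : ℝ := max 0 (1 - |x|)

theorem continuous_tent : Continuous tent := by unfold tent; fun_prop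

theorem tent_nonneg (x : ℝ) : 0 ≤ tent x := le_max_left _ _

theorem tent_le_one (x : ℝ) : tent x ≤ 1 := max_le zero_le_one (by linarith [abs_nonneg x])

theorem tent_eq_zero {x : ℝ} (hx : 1 ≤ |x|) : tent x = 0 := max_eq_left (by linarith)

theorem tent_pos {x : ℝ} (hx : |x| < 1) : 0 < tent x := lt_max_of_lt_right (by linarith)

theorem tent_mul_tent_eq_zero {x y : ℝ} (hxy : 2 ≤ |x - y|) : tent x * tent y = 0 := by
  rcases le_or_gt 1 |x| with hx | hx
  · rw [tent_eq_zero hx, zero_mul]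
  · rw [tent_eq_zero (x := y) (by linarith [abs_sub x y]), mul_zero]

theorem integral_tent_pow_ne_zero (k : ℕ) : ∫ x in (-1 : ℝ)..1, (tent x : ℂ) ^ k ≠ 0 := by
  have hpos : 0 < ∫ x in (-1 : ℝ)..1, tent x ^ k :=
    intervalIntegral.intervalIntegral_pos_of_pos_on
      ((continuous_tent.pow k).intervalIntegrable _ _)
      (fun x hx => pow_pos (tent_pos (abs_lt.2 hx)) k) (by norm_num)
  simp_rw [← Complex.ofReal_pow, intervalIntegral.integral_ofReal]
  exact_mod_cast hpos.ne'

theorem integral_mul_tent_pow {F : ℝ → ℂ} {k : ℕ} (hk : k ≠ 0) {c δ : ℝ} (hδ : 0 < δ)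
    (h0 : 0 ≤ c - δ) (h1 : c + δ ≤ 1) :
    ∫ s in (0 : ℝ)..1, F s * (tent ((s - c) / δ) : ℂ) ^ k
      = δ * ∫ x in (-1 : ℝ)..1, F (c + δ * x) * (tent x : ℂ) ^ k := by
  set g : ℝ → ℂ := fun s => F s * (tent ((s - c) / δ) : ℂ) ^ k
  have hsupp : Function.support g ⊆ Ioc (c - δ) (c + δ) := by
    intro s hs
    have hlt : |(s - c) / δ| < 1 := by
      by_contra hge
      exact hs (by simp [g, tent_eq_zero (not_lt.1 hge), hk])
    rw [abs_div, abs_of_pos hδ, div_lt_one hδ, abs_lt] at hlt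
    exact ⟨by linarith, by linarith⟩
  have hcomp : ∀ x, g (c + δ * x) = F (c + δ * x) * (tent x : ℂ) ^ k := fun x => by
    simp only [g, add_sub_cancel_left, mul_div_cancel_left₀ _ hδ.ne']
  calc ∫ s in (0 : ℝ)..1, g s
      = ∫ s in (c + δ * -1)..(c + δ * 1), g s := by
        rw [intervalIntegral.integral_eq_integral_of_support_subset
            (hsupp.trans (Ioc_subset_Ioc (by linarith) h1)),
          intervalIntegral.integral_eq_integral_of_support_subset
            (hsupp.trans (Ioc_subset_Ioc (by linarith) (by linarith)))]
    _ = δ * ∫ x in (-1 : ℝ)..1, g (c + δ * x) := by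
        rw [← intervalIntegral.smul_integral_comp_add_mul, Complex.real_smul]
    _ = _ := by simp only [hcomp]

theorem tendsto_integral_comp_mul_tent_pow {F : ℝ → ℂ} (hF : Continuous F) (s₀ κ : ℝ) (k : ℕ) :
    Tendsto (fun δ : ℝ => ∫ x in (-1 : ℝ)..1, F (s₀ + κ * δ + δ * x) * (tent x : ℂ) ^ k)
      (𝓝 0) (𝓝 (F s₀ * ∫ x in (-1 : ℝ)..1, (tent x : ℂ) ^ k)) := by
  have hcont : Continuous fun δ : ℝ =>
      ∫ x in (-1 : ℝ)..1, F (s₀ + κ * δ + δ * x) * (tent x : ℂ) ^ k := by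
    have := continuous_tent
    fun_prop
  simpa [intervalIntegral.integral_const_mul] using hcont.tendsto 0

noncomputable def bump (s₀ δ : ℝ) (i : ℕ) (s : ℝ) : ℝ := tent ((s - (s₀ + 2 * i * δ)) / δ)

noncomputable def bumpMoment (F : ℝ → ℂ) (k : ℕ) (s₀ δ : ℝ) (i : ℕ) : ℂ :=
  ∫ s in (0 : ℝ)..1, F s * (bump s₀ δ i s : ℂ) ^ k

theorem bump_mul_bump_eq_zero {s₀ δ : ℝ} (hδ : 0 < δ) {i j : ℕ} (hij : i ≠ j) (s : ℝ) :
    bump s₀ δ i s * bump s₀ δ j s = 0 := by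
  apply tent_mul_tent_eq_zero
  have hdiff : (s - (s₀ + 2 * i * δ)) / δ - (s - (s₀ + 2 * j * δ)) / δ = 2 * ((j : ℝ) - i) := by
    field_simp; ring
  have hone : 1 ≤ |(j : ℝ) - i| := by
    rcases Nat.lt_or_gt_of_ne hij with h | h
    · have : (i : ℝ) + 1 ≤ j := by exact_mod_cast h
      linarith [le_abs_self ((j : ℝ) - i)]
    · have : (j : ℝ) + 1 ≤ i := by exact_mod_cast h
      linarith [neg_abs_le ((j : ℝ) - i)]
  rw [hdiff, abs_mul, abs_two]
  linarith

theorem bump_eq_zero_of_le {s₀ δ : ℝ} (hδ : 0 < δ) {i : ℕ} {s : ℝ}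
    (hs : δ ≤ |s - (s₀ + 2 * i * δ)|) : bump s₀ δ i s = 0 :=
  tent_eq_zero (by rwa [abs_div, abs_of_pos hδ, one_le_div hδ])

theorem bumpMoment_eq_mul (F : ℝ → ℂ) {k : ℕ} (hk : k ≠ 0) {s₀ δ : ℝ} (hδ : 0 < δ) {i : ℕ}
    (h0 : δ ≤ s₀) (h1 : s₀ + (2 * i + 1) * δ ≤ 1) :
    bumpMoment F k s₀ δ i
      = δ * ∫ x in (-1 : ℝ)..1, F (s₀ + 2 * i * δ + δ * x) * (tent x : ℂ) ^ k :=
  integral_mul_tent_pow hk hδ (by nlinarith [Nat.cast_nonneg (α := ℝ) i]) (by linarith)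

theorem exists_bump_scale {F₁ F₂ : ℝ → ℂ} (hF₁ : Continuous F₁) (hF₂ : Continuous F₂) {s₀ : ℝ}
    (hs₀ : s₀ ∈ Ioo 0 1) (h₁ : F₁ s₀ ≠ 0) (h₂ : F₂ s₀ ≠ 0) :
    ∃ δ > 0, δ ≤ s₀ ∧ s₀ + 7 * δ ≤ 1 ∧ (∀ i : Fin 4, bumpMoment F₁ 1 s₀ δ i ≠ 0) ∧
      bumpMoment F₂ 2 s₀ δ 0 * bumpMoment F₁ 1 s₀ δ 1 ^ 2
        + bumpMoment F₂ 2 s₀ δ 1 * bumpMoment F₁ 1 s₀ δ 0 ^ 2 ≠ 0 ∧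
      bumpMoment F₂ 2 s₀ δ 2 * bumpMoment F₁ 1 s₀ δ 3 ^ 2
        + bumpMoment F₂ 2 s₀ δ 3 * bumpMoment F₁ 1 s₀ δ 2 ^ 2 ≠ 0 := by
  set m : (ℝ → ℂ) → ℕ → ℕ → ℝ → ℂ := fun F k i δ =>
    ∫ x in (-1 : ℝ)..1, F (s₀ + 2 * i * δ + δ * x) * (tent x : ℂ) ^ k
  have hlim : ∀ F, Continuous F → ∀ k i, Tendsto (m F k i) (𝓝 0)
      (𝓝 (F s₀ * ∫ x in (-1 : ℝ)..1, (tent x : ℂ) ^ k)) :=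
    fun F hF k i => tendsto_integral_comp_mul_tent_pow hF s₀ (2 * i) k
  have hpair : ∀ i j, ∀ᶠ δ in 𝓝 0,
      m F₂ 2 i δ * m F₁ 1 j δ ^ 2 + m F₂ 2 j δ * m F₁ 1 i δ ^ 2 ≠ 0 := fun i j =>
    (((hlim F₂ hF₂ 2 i).mul ((hlim F₁ hF₁ 1 j).pow 2)).add
      ((hlim F₂ hF₂ 2 j).mul ((hlim F₁ hF₁ 1 i).pow 2))).eventually_ne (by
        rw [← two_mul]
        exact mul_ne_zero two_ne_zero (mul_ne_zero (mul_ne_zero h₂ (integral_tent_pow_ne_zero 2))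
          (pow_ne_zero 2 (mul_ne_zero h₁ (integral_tent_pow_ne_zero 1)))))
  have hmom : ∀ᶠ δ in 𝓝 (0 : ℝ), ∀ i : Fin 4, m F₁ 1 i δ ≠ 0 :=
    eventually_all.2 fun i => (hlim F₁ hF₁ 1 i).eventually_ne
      (mul_ne_zero h₁ (integral_tent_pow_ne_zero 1))
  have hsmall : ∀ᶠ δ in 𝓝 (0 : ℝ), δ ≤ s₀ ∧ s₀ + 7 * δ ≤ 1 :=
    (eventually_le_nhds hs₀.1).and
      (((continuous_const.add (continuous_const.mul continuous_id)).tendsto' (0 : ℝ) s₀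
        (by simp)).eventually (eventually_le_nhds hs₀.2))
  obtain ⟨δ, ⟨⟨hδs₀, hδ1⟩, hm, h01, h23⟩, hδ⟩ :=
    (((hsmall.and (hmom.and ((hpair 0 1).and (hpair 2 3)))).filter_mono nhdsWithin_le_nhds).and
      self_mem_nhdsWithin).exists (f := 𝓝[>] (0 : ℝ))
  have hδC : (δ : ℂ) ≠ 0 := Complex.ofReal_ne_zero.2 hδ.ne'
  have hscale : ∀ F k, k ≠ 0 → ∀ i : ℕ, i ≤ 3 → bumpMoment F k s₀ δ i = δ * m F k i δ :=
    fun F k hk i hi => bumpMoment_eq_mul F hk hδ hδs₀ (by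
      have : (i : ℝ) ≤ 3 := by exact_mod_cast hi
      nlinarith)
  refine ⟨δ, hδ, hδs₀, hδ1, fun i => ?_, ?_, ?_⟩
  · rw [hscale F₁ 1 one_ne_zero i (Nat.le_of_lt_succ i.is_lt)]
    exact mul_ne_zero hδC (hm i)
  · rw [hscale F₁ 1 one_ne_zero 0 (by norm_num), hscale F₁ 1 one_ne_zero 1 (by norm_num),
      hscale F₂ 2 two_ne_zero 0 (by norm_num), hscale F₂ 2 two_ne_zero 1 (by norm_num)]
    convert mul_ne_zero (pow_ne_zero 3 hδC) h01 using 1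
    ring
  · rw [hscale F₁ 1 one_ne_zero 2 (by norm_num), hscale F₁ 1 one_ne_zero 3 (by norm_num),
      hscale F₂ 2 two_ne_zero 2 (by norm_num), hscale F₂ 2 two_ne_zero 3 (by norm_num)]
    convert mul_ne_zero (pow_ne_zero 3 hδC) h23 using 1
    ring

theorem exists_multiplier_of_continuous {F₁ F₂ : ℝ → ℂ} (hF₁ : Continuous F₁)
    (hF₂ : Continuous F₂) {s₀ : ℝ} (hs₀ : s₀ ∈ Ioo 0 1) (h₁ : F₁ s₀ ≠ 0) (h₂ : F₂ s₀ ≠ 0)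
    (x₁ x₂ : ℂ) :
    ∃ h : ℝ → ℂ, Continuous h ∧ (∀ s, h s ≠ 0) ∧ h 0 = 1 ∧ h 1 = 1 ∧
      ∫ s in (0 : ℝ)..1, F₁ s * h s = x₁ ∧ ∫ s in (0 : ℝ)..1, F₂ s * h s ^ 2 = x₂ := by
  obtain ⟨δ, hδ, hδs₀, hδ1, hA, h01, h23⟩ := exists_bump_scale hF₁ hF₂ hs₀ h₁ h₂
  obtain ⟨w, hw, hx₁, hx₂⟩ := exists_slitPlane_solution
    (fun i : Fin 4 => bumpMoment F₁ 1 s₀ δ i) (fun i => bumpMoment F₂ 1 s₀ δ i)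
    (fun i => bumpMoment F₂ 2 s₀ δ i) hA h01 h23
    (x₁ - ∫ s in (0 : ℝ)..1, F₁ s) (x₂ - ∫ s in (0 : ℝ)..1, F₂ s)
  set T : Fin 4 → ℝ → ℂ := fun i s => (bump s₀ δ i s : ℂ)
  have hT : ∀ i, Continuous (T i) := fun i => by
    have := continuous_tent
    simp only [T, bump]
    fun_prop
  have hdisj : ∀ s, Pairwise fun i j => T i s * T j s = 0 := fun s i j hij => by
    simp only [T]
    exact_mod_cast bump_mul_bump_eq_zero hδ (Fin.val_injective.ne hij) s
  have hends : ∀ i : Fin 4, T i 0 = 0 ∧ T i 1 = 0 := fun i => by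
    have hi : ((i : ℕ) : ℝ) ≤ 3 := by exact_mod_cast Nat.le_of_lt_succ i.is_lt
    simp only [T, Complex.ofReal_eq_zero]
    exact ⟨bump_eq_zero_of_le hδ (by rw [abs_of_neg (by nlinarith)]; nlinarith),
      bump_eq_zero_of_le hδ (by rw [abs_of_pos (by nlinarith)]; nlinarith)⟩
  refine ⟨fun s => ∏ i, (1 + w i * T i s), by fun_prop, fun s => ?_, by simp [hends],
    by simp [hends], ?_, ?_⟩
  · exact Finset.prod_ne_zero_iff.2 fun i _ => Complex.slitPlane_ne_zero
      (one_add_mul_ofReal_mem_slitPlane (hw i) (tent_nonneg _) (tent_le_one _))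
  · rw [intervalIntegral.integral_mul_prod_one_add_mul hF₁ hT hdisj]
    simp only [bumpMoment, pow_one] at hx₁
    rw [hx₁, add_sub_cancel]
  · rw [intervalIntegral.integral_mul_prod_one_add_mul_sq hF₂ hT hdisj]
    simp only [bumpMoment, pow_one] at hx₂
    rw [hx₂, add_sub_cancel]

theorem exists_multiplier {F₁ F₂ : ℝ → ℂ} (hF₁ : ContinuousOn F₁ (Icc 0 1))
    (hF₂ : ContinuousOn F₂ (Icc 0 1)) {s₀ : ℝ} (hs₀ : s₀ ∈ Ioo 0 1) (h₁ : F₁ s₀ ≠ 0)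
    (h₂ : F₂ s₀ ≠ 0) (x₁ x₂ : ℂ) :
    ∃ h : ℝ → ℂ, Continuous h ∧ (∀ s, h s ≠ 0) ∧ h 0 = 1 ∧ h 1 = 1 ∧
      ∫ s in (0 : ℝ)..1, F₁ s * h s = x₁ ∧ ∫ s in (0 : ℝ)..1, F₂ s * h s ^ 2 = x₂ := by
  set p : ℝ → ℝ := fun s => projIcc 0 1 zero_le_one s
  have hp : ∀ s ∈ uIcc (0 : ℝ) 1, p s = s := fun s hs => by
    rw [uIcc_of_le zero_le_one] at hs
    simp [p, projIcc_of_mem _ hs]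
  have hpIcc : ∀ s, p s ∈ Icc (0 : ℝ) 1 := fun s => (projIcc 0 1 _ s).2
  have hs₀' : p s₀ = s₀ := hp s₀ (Icc_subset_uIcc (Ioo_subset_Icc_self hs₀))
  obtain ⟨h, hcont, hne, h0, h1, hx₁, hx₂⟩ := exists_multiplier_of_continuous
    (hF₁.comp_continuous (by fun_prop) hpIcc) (hF₂.comp_continuous (by fun_prop) hpIcc) hs₀
    (by simpa [hs₀'] using h₁) (by simpa [hs₀'] using h₂) x₁ x₂
  refine ⟨h, hcont, hne, h0, h1, ?_, ?_⟩
  · rw [← hx₁]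
    exact intervalIntegral.integral_congr fun s hs => by simp [hp s hs]
  · rw [← hx₂]
    exact intervalIntegral.integral_congr fun s hs => by simp [hp s hs]

/-- Lemma 6.6 of the paper: for continuous `f` nonconstant and `a`
nonvanishing on `[0,1]`, and any `(x₁,x₂) ∈ ℂ²`, there is a continuous nonvanishing
multiplier `h` with `h(0) = h(1) = 1` and `∫₀¹ a(s)(h(s)f(s), h(s)²f(s)²) ds = (x₁,x₂)`. -/
theorem stmt_8
    (f a : ℝ → ℂ)
    (hf : ContinuousOn f (Icc (0:ℝ) 1))
    (hac : ContinuousOn a (Icc (0:ℝ) 1))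
    (ha0 : ∀ s ∈ Icc (0:ℝ) 1, a s ≠ 0)
    (hnc : ∃ s₁ ∈ Icc (0:ℝ) 1, ∃ s₂ ∈ Icc (0:ℝ) 1, f s₁ ≠ f s₂)
    (x₁ x₂ : ℂ) :
    ∃ h : ℝ → ℂ,
      ContinuousOn h (Icc (0:ℝ) 1) ∧
      (∀ s ∈ Icc (0:ℝ) 1, h s ≠ 0) ∧
      h 0 = 1 ∧ h 1 = 1 ∧
      (∫ s in (0:ℝ)..1,
        (a s * h s * f s, a s * (h s) ^ 2 * (f s) ^ 2)) = (x₁, x₂) := by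
  obtain ⟨s₁, hs₁, s₂, hs₂, hne⟩ := hnc
  obtain ⟨s₀, hs₀, hfs₀⟩ := exists_mem_Ioo_ne_zero zero_lt_one hf <| by
    by_contra! h
    exact hne ((h s₁ hs₁).trans (h s₂ hs₂).symm)
  have ha₀ := ha0 s₀ (Ioo_subset_Icc_self hs₀)
  obtain ⟨h, hcont, hne, h0, h1, hx₁, hx₂⟩ :=
    exists_multiplier (F₁ := fun s => a s * f s) (F₂ := fun s => a s * f s ^ 2)
      (hac.mul hf) (hac.mul (hf.pow 2)) hs₀ (mul_ne_zero ha₀ hfs₀)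
      (mul_ne_zero ha₀ (pow_ne_zero 2 hfs₀)) x₁ x₂
  refine ⟨h, hcont.continuousOn, fun s _ => hne s, h0, h1, ?_⟩
  rw [intervalIntegral.integral_pair (f := fun s => a s * h s * f s)
    (g := fun s => a s * h s ^ 2 * f s ^ 2)
    (((hac.mul hcont.continuousOn).mul hf).intervalIntegrable_of_Icc zero_le_one)
    (((hac.mul (hcont.pow 2).continuousOn).mul (hf.pow 2)).intervalIntegrable_of_Icc zero_le_one),
    ← hx₁, ← hx₂]
  simp_rw [mul_right_comm (a _) (h _), mul_right_comm (a _) (h _ ^ 2)]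
end

section
/- Let f : [0,1] → ℂ be continuous and nonconstant and let a : [0,1] → ℂ \ {0} be continuous. Then there exist an integer N ≥ 1 and points 0 < s₁ < s₂ < ⋯ < s_N < 1 such that the map ℂᴺ → ℂ² given by (y₁, …, y_N) ↦ Σ_{i=1}^N a(sᵢ) (yᵢ f(sᵢ), yᵢ² f(sᵢ)²) is surjective. -/
open Set

/-!
Two points suffice. Nonconstancy gives a point where `f ≠ 0`, and continuity moves it to some
`t₀ ∈ (0,1)` and then gives `t₁ ∈ (t₀,1)` with `f t₁ ≠ 0` and `a t₀ + a t₁ ≠ 0`. Substituting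
`zᵢ = yᵢ f(tᵢ)`, surjectivity reduces to solving `a₁z₁ + a₂z₂ = u`, `a₁z₁² + a₂z₂² = v`:
eliminating `z₁` leaves a quadratic in `z₂` with leading coefficient `a₂(a₁ + a₂) ≠ 0`,
which has a root since `ℂ` is algebraically closed.
-/

theorem ContinuousOn.exists_mem_ne_of_mem_closure {α β : Type*} [TopologicalSpace α]
    [TopologicalSpace β] [T1Space β] {f : α → β} {s t : Set α} {x : α} {c : β}
    (hf : ContinuousOn f s) (hts : t ⊆ s) (hx : x ∈ s) (hxt : x ∈ closure t) (hfx : f x ≠ c) :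
    ∃ y ∈ t, f y ≠ c :=
  haveI := mem_closure_iff_nhdsWithin_neBot.mp hxt
  ((((hf x hx).mono hts).tendsto.eventually_ne hfx).and self_mem_nhdsWithin).exists.imp
    fun _ h => ⟨h.2, h.1⟩

theorem exists_weighted_sum_and_sum_sq_eq {K : Type*} [Field K] [IsAlgClosed K] [NeZero (2 : K)]
    {a₁ a₂ : K} (h₁ : a₁ ≠ 0) (h₂ : a₂ ≠ 0) (h₁₂ : a₁ + a₂ ≠ 0) (u v : K) :
    ∃ z₁ z₂ : K, a₁ * z₁ + a₂ * z₂ = u ∧ a₁ * z₁ ^ 2 + a₂ * z₂ ^ 2 = v := by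
  obtain ⟨t, ht⟩ := exists_quadratic_eq_zero (mul_ne_zero h₂ h₁₂)
    (IsAlgClosed.exists_eq_mul_self (discrim (a₂ * (a₁ + a₂)) (-2 * u * a₂) (u ^ 2 - a₁ * v)))
  refine ⟨(u - a₂ * t) / a₁, t, by field_simp; ring, ?_⟩
  field_simp
  linear_combination ht

theorem surjective_weighted_sum_and_sum_sq {K : Type*} [Field K] [IsAlgClosed K]
    [NeZero (2 : K)] {a : Fin 2 → K} (ha : ∀ i, a i ≠ 0) (hsum : a 0 + a 1 ≠ 0) :
    Function.Surjective (fun z : Fin 2 → K => (∑ i, a i * z i, ∑ i, a i * z i ^ 2)) := by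
  rintro ⟨u, v⟩
  obtain ⟨z₁, z₂, hu, hv⟩ := exists_weighted_sum_and_sum_sq_eq (ha 0) (ha 1) hsum u v
  exact ⟨![z₁, z₂], by simp [Fin.sum_univ_two, hu, hv]⟩

theorem exists_two_points_ne_zero {f a : ℝ → ℂ} (hf : ContinuousOn f (Icc 0 1))
    (ha : ContinuousOn a (Icc 0 1)) (ha0 : ∀ s ∈ Icc (0:ℝ) 1, a s ≠ 0)
    {s₀ : ℝ} (hs₀ : s₀ ∈ Icc (0:ℝ) 1) (hfs₀ : f s₀ ≠ 0) :
    ∃ t₀ t₁ : ℝ, 0 < t₀ ∧ t₀ < t₁ ∧ t₁ < 1 ∧ f t₀ ≠ 0 ∧ f t₁ ≠ 0 ∧ a t₀ + a t₁ ≠ 0 := by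
  obtain ⟨t₀, ht₀, hft₀⟩ := hf.exists_mem_ne_of_mem_closure Ioo_subset_Icc_self hs₀
    (by rwa [closure_Ioo zero_ne_one]) hfs₀
  have ht₀' : t₀ ∈ Icc (0:ℝ) 1 := Ioo_subset_Icc_self ht₀
  -- `f x * (a t₀ + a x) ≠ 0` encodes both conditions on the second point.
  obtain ⟨t₁, ht₁, hg⟩ :=
    (hf.mul ((continuousOn_const (c := a t₀)).add ha)).exists_mem_ne_of_mem_closure
    (t := Ioo t₀ 1) (fun x hx => ⟨ht₀.1.le.trans hx.1.le, hx.2.le⟩) ht₀'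
    (by rw [closure_Ioo ht₀.2.ne]; exact ⟨le_rfl, ht₀.2.le⟩)
    (mul_ne_zero hft₀ (by simpa [← two_mul] using ha0 t₀ ht₀'))
  obtain ⟨hft₁, hat₁⟩ := mul_ne_zero_iff.mp hg
  exact ⟨t₀, t₁, ht₀.1, ht₁.1, ht₁.2, hft₀, hft₁, hat₁⟩

/-- for `f : [0,1] → ℂ` continuous nonconstant and `a : [0,1] → ℂ∖{0}`
continuous, there exist `N ≥ 1` and points `0 < s₁ < ⋯ < s_N < 1` such that the polynomial
map `(y₁,…,y_N) ↦ Σᵢ a(sᵢ)(yᵢ f(sᵢ), yᵢ² f(sᵢ)²)` from `ℂᴺ` to `ℂ²` is surjective. -/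
theorem stmt_11
    (f a : ℝ → ℂ)
    (hf : ContinuousOn f (Icc (0:ℝ) 1))
    (hnc : ∃ s₁ ∈ Icc (0:ℝ) 1, ∃ s₂ ∈ Icc (0:ℝ) 1, f s₁ ≠ f s₂)
    (hac : ContinuousOn a (Icc (0:ℝ) 1))
    (ha0 : ∀ s ∈ Icc (0:ℝ) 1, a s ≠ 0) :
    ∃ N : ℕ, 1 ≤ N ∧ ∃ s : Fin N → ℝ, StrictMono s ∧ (∀ i, s i ∈ Ioo (0:ℝ) 1) ∧
      Function.Surjective (fun y : Fin N → ℂ =>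
        ((∑ i, a (s i) * y i * f (s i),
          ∑ i, a (s i) * (y i) ^ 2 * (f (s i)) ^ 2) : ℂ × ℂ)) := by
  obtain ⟨s₀, hs₀, hfs₀⟩ : ∃ s₀ ∈ Icc (0:ℝ) 1, f s₀ ≠ 0 := by
    obtain ⟨s₁, hs₁, s₂, hs₂, hne⟩ := hnc
    by_cases h : f s₁ = 0
    · exact ⟨s₂, hs₂, fun h₂ => hne (h.trans h₂.symm)⟩
    · exact ⟨s₁, hs₁, h⟩
  obtain ⟨t₀, t₁, h0, h01, h1, hft₀, hft₁, hat⟩ :=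
    exists_two_points_ne_zero hf hac ha0 hs₀ hfs₀
  have hs : ∀ i, ![t₀, t₁] i ∈ Ioo (0:ℝ) 1 :=
    Fin.forall_fin_two.mpr ⟨⟨h0, h01.trans h1⟩, ⟨h0.trans h01, h1⟩⟩
  refine ⟨2, one_le_two, ![t₀, t₁], Fin.strictMono_iff_lt_succ.mpr (by simpa using h01), hs, ?_⟩
  have hf₀₁ : ∀ i, f (![t₀, t₁] i) ≠ 0 := Fin.forall_fin_two.mpr ⟨hft₀, hft₁⟩
  have hscale : Function.Surjective (fun (y : Fin 2 → ℂ) i => y i * f (![t₀, t₁] i)) :=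
    fun z => ⟨fun i => z i / f (![t₀, t₁] i), funext fun i => div_mul_cancel₀ _ (hf₀₁ i)⟩
  convert (surjective_weighted_sum_and_sum_sq (fun i => ha0 _ (Ioo_subset_Icc_self (hs i)))
    (by simpa using hat)).comp hscale using 2 with y
  simp only [Function.comp_apply, mul_pow, mul_assoc]
end
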